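/- arXiv:math/0506198 — 13 statements merged into one kernel-verified Lean document; each statement's English description precedes it below -/
import Mathlib

section
/- Let a_1, …, a_m be orthonormal vectors in a complex inner product space H, let r_t, ρ_t ∈ ℝ for 1 ≤ t ≤ m, and let x_1, …, x_n ∈ H satisfy 0 ≤ r_t²‖x_k‖ ≤ Re⟨x_k, r_t a_t⟩ and 0 ≤ ρ_t²‖x_k‖ ≤ Im⟨x_k, ρ_t a_t⟩ for all 1 ≤ t ≤ m and 1 ≤ k ≤ n. Then (Σ_{t=1}^m (r_t² + ρ_t²))^{1/2} · Σ_{k=1}^n ‖x_k‖ ≤ ‖Σ_{k=1}^n x_k‖, and equality holds if and only if Σ_{k=1}^n x_k = (Σ_{k=1}^n ‖x_k‖) · Σ_{t=1}^m (r_t + iρ_t) a_t. -/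
/-- **Theorem 2.1.** Let `a 1, …, a m` be orthonormal vectors in a complex inner product
space `H`, `r t, ρ t ∈ ℝ`, and suppose `x 1, …, x n ∈ H` satisfy
`0 ≤ (r t)^2 * ‖x k‖ ≤ Re⟨x k, r t • a t⟩` and `0 ≤ (ρ t)^2 * ‖x k‖ ≤ Im⟨x k, ρ t • a t⟩`
for all `t, k`.  (Here `⟨x, y⟩` is linear in the first slot, i.e. Mathlib's `inner y x`.)
Then `(∑ t, (r t)^2 + (ρ t)^2)^{1/2} * ∑ k, ‖x k‖ ≤ ‖∑ k, x k‖` with equality iff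
`∑ k, x k = (∑ k, ‖x k‖) • ∑ t, (r t + i * ρ t) • a t`. -/
theorem stmt0 {H : Type*} [NormedAddCommGroup H] [InnerProductSpace ℂ H]
    {m n : ℕ} {a : Fin m → H} (ha : Orthonormal ℂ a)
    (r ρ : Fin m → ℝ) (x : Fin n → H)
    (hr : ∀ t k, 0 ≤ (r t) ^ 2 * ‖x k‖ ∧
      (r t) ^ 2 * ‖x k‖ ≤ (inner ℂ ((r t : ℂ) • a t) (x k) : ℂ).re)
    (hρ : ∀ t k, 0 ≤ (ρ t) ^ 2 * ‖x k‖ ∧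
      (ρ t) ^ 2 * ‖x k‖ ≤ (inner ℂ ((ρ t : ℂ) • a t) (x k) : ℂ).im) :
    Real.sqrt (∑ t, ((r t) ^ 2 + (ρ t) ^ 2)) * ∑ k, ‖x k‖ ≤ ‖∑ k, x k‖ ∧
    (Real.sqrt (∑ t, ((r t) ^ 2 + (ρ t) ^ 2)) * ∑ k, ‖x k‖ = ‖∑ k, x k‖ ↔
      ∑ k, x k = ((∑ k, ‖x k‖ : ℝ) : ℂ) • ∑ t, ((r t : ℂ) + (ρ t : ℂ) * Complex.I) • a t) := by
  set S : H := ∑ k, x k with hS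
  set X : ℝ := ∑ k, ‖x k‖ with hXdef
  set c : ℝ := ∑ t, ((r t) ^ 2 + (ρ t) ^ 2) with hcdef
  set v : H := ∑ t, ((r t : ℂ) + (ρ t : ℂ) * Complex.I) • a t with hvdef
  have hX : 0 ≤ X := Finset.sum_nonneg fun k _ => norm_nonneg _
  have hc : 0 ≤ c := Finset.sum_nonneg fun t _ => by positivity
  -- norm of v
  have hv2 : ‖v‖ ^ 2 = c := by
    have := ha.inner_sum (fun t => ((r t : ℂ) + (ρ t : ℂ) * Complex.I))
      (fun t => ((r t : ℂ) + (ρ t : ℂ) * Complex.I)) Finset.univ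
    have h2 : (‖v‖ : ℝ) ^ 2 = ((inner ℂ v v : ℂ)).re := by
      rw [← @inner_self_eq_norm_sq ℂ]; rfl
    rw [h2, hvdef, this]
    rw [Complex.re_sum]
    apply Finset.sum_congr rfl
    intro t _
    simp [Complex.mul_re, Complex.conj_ofReal, Complex.add_re, Complex.add_im]
    ring
  have hvn : ‖v‖ = Real.sqrt c := by
    rw [← hv2, Real.sqrt_sq (norm_nonneg v)]
  -- lower bound on re inner
  have hterm : ∀ t k, ((r t) ^ 2 + (ρ t) ^ 2) * ‖x k‖ ≤
      r t * (inner ℂ (a t) (x k) : ℂ).re + ρ t * (inner ℂ (a t) (x k) : ℂ).im := by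
    intro t k
    have h1 := (hr t k).2
    have h2 := (hρ t k).2
    rw [inner_smul_left] at h1 h2
    simp only [Complex.conj_ofReal, Complex.mul_re, Complex.mul_im, Complex.ofReal_re,
      Complex.ofReal_im, zero_mul, mul_zero, sub_zero, zero_add, add_zero] at h1 h2
    linarith [h1, h2]
  have hinner : (inner ℂ v S : ℂ).re =
      ∑ t, ∑ k, (r t * (inner ℂ (a t) (x k) : ℂ).re + ρ t * (inner ℂ (a t) (x k) : ℂ).im) := by
    rw [hvdef, hS, sum_inner, Complex.re_sum]
    apply Finset.sum_congr rfl
    intro t _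
    rw [inner_sum, Complex.re_sum]
    apply Finset.sum_congr rfl
    intro k _
    rw [inner_smul_left]
    simp [Complex.mul_re, Complex.conj_ofReal, Complex.conj_I]
  have hre : c * X ≤ (inner ℂ v S : ℂ).re := by
    rw [hinner, hcdef, hXdef, Finset.sum_mul]
    apply Finset.sum_le_sum
    intro t _
    rw [Finset.mul_sum]
    exact Finset.sum_le_sum fun k _ => hterm t k
  have hcs : (inner ℂ v S : ℂ).re ≤ Real.sqrt c * ‖S‖ := by
    calc (inner ℂ v S : ℂ).re ≤ ‖(inner ℂ v S : ℂ)‖ := Complex.re_le_norm _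
      _ ≤ ‖v‖ * ‖S‖ := norm_inner_le_norm v S
      _ = Real.sqrt c * ‖S‖ := by rw [hvn]
  have hsq : Real.sqrt c * Real.sqrt c = c := Real.mul_self_sqrt hc
  have key : Real.sqrt c * X ≤ ‖S‖ := by
    rcases eq_or_lt_of_le (Real.sqrt_nonneg c) with h0 | h0
    · rw [← h0, zero_mul]; exact norm_nonneg S
    · have : Real.sqrt c * (Real.sqrt c * X) ≤ Real.sqrt c * ‖S‖ := by
        nlinarith [hre, hcs]
      exact le_of_mul_le_mul_left this h0
  refine ⟨key, ?_, ?_⟩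
  · intro heq
    have hreq : (inner ℂ v S : ℂ).re = c * X := by
      have : (inner ℂ v S : ℂ).re ≤ c * X := by
        calc (inner ℂ v S : ℂ).re ≤ Real.sqrt c * ‖S‖ := hcs
          _ = Real.sqrt c * (Real.sqrt c * X) := by rw [heq]
          _ = c * X := by rw [← mul_assoc, hsq]
      linarith [hre]
    have hS2 : ‖S‖ ^ 2 = c * X ^ 2 := by
      rw [← heq]; nlinarith [hsq]
    have hz : ‖S - (X : ℂ) • v‖ ^ 2 = 0 := by
      have hns := @norm_sub_sq ℂ H _ _ _ S ((X : ℂ) • v)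
      have h3 : (inner ℂ S v : ℂ).re = (inner ℂ v S : ℂ).re := by simpa [RCLike.re_to_complex] using inner_re_symm (𝕜 := ℂ) S v
      have hsm : (inner ℂ S ((X : ℂ) • v) : ℂ).re = X * (inner ℂ v S : ℂ).re := by
        rw [inner_smul_right, ← h3]
        simp [Complex.mul_re]
      have hnsm : ‖(X : ℂ) • v‖ ^ 2 = X ^ 2 * c := by
        rw [norm_smul, mul_pow, ← hv2, Complex.norm_real, Real.norm_eq_abs, sq_abs]
      rw [hns] at *
      simp only [RCLike.re_to_complex] at *
      rw [hsm, hnsm, hS2, hreq]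
      ring
    have : S - (X : ℂ) • v = 0 := by
      have := pow_eq_zero_iff (n := 2) (by norm_num) |>.mp hz
      exact norm_eq_zero.mp this
    exact sub_eq_zero.mp this
  · intro heq
    rw [heq, norm_smul, hvn, Complex.norm_real, Real.norm_eq_abs, abs_of_nonneg hX, mul_comm]
end

section
/- Let a be a unit vector in a complex inner product space H and let x_1, …, x_n ∈ H be nonzero vectors. Let r, r', s, s' > 0, set α = min{‖x_k‖ : 1 ≤ k ≤ n}, and suppose p, q > 0 satisfy p ≤ ((rα)² + s²)^{1/2}, q ≤ ((r'α)² + s'²)^{1/2}, max{‖r x_k − s a‖ : 1 ≤ k ≤ n} ≤ p and max{‖r' x_k − i s' a‖ : 1 ≤ k ≤ n} ≤ q. Define α_{r,s} = min{(r²‖x_k‖² − p² + s²)/(2rs‖x_k‖) : 1 ≤ k ≤ n} and β_{r',s'} = min{(r'²‖x_k‖² − q² + s'²)/(2r's'‖x_k‖) : 1 ≤ k ≤ n}. Then (α_{r,s}² + β_{r',s'}²)^{1/2} · Σ_{k=1}^n ‖x_k‖ ≤ ‖Σ_{k=1}^n x_k‖, and equality holds if and only if Σ_{k=1}^n x_k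 = (α_{r,s} + i β_{r',s'}) (Σ_{k=1}^n ‖x_k‖) a. -/
private lemma aux_sq {A B T rz iz : ℝ} (hA : 0 ≤ A*T) (hB : 0 ≤ B*T)
    (h1 : A*T ≤ rz) (h2 : B*T ≤ iz) : (A^2+B^2)*T^2 ≤ rz^2+iz^2 := by nlinarith

private lemma aux_eq {A B T rz iz : ℝ} (hA : 0 ≤ A*T) (hB : 0 ≤ B*T)
    (h1 : A*T ≤ rz) (h2 : B*T ≤ iz) (h3 : rz^2 + iz^2 = (A^2+B^2)*T^2) :
    rz = A*T ∧ iz = B*T := by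
  constructor <;> nlinarith

local notation "⟪" x ", " y "⟫C" => (inner ℂ x y : ℂ)

set_option maxHeartbeats 1000000 in
/-- **Theorem 2.2.** Let `a` be a unit vector in a complex inner product space `H`,
`x 1, …, x n` nonzero vectors, `r, r', s, s' > 0`, `α = min ‖x k‖`,
`0 < p ≤ ((r α)^2 + s^2)^{1/2}`, `0 < q ≤ ((r' α)^2 + s'^2)^{1/2}`,
`max ‖r • x k - s • a‖ ≤ p` and `max ‖r' • x k - (i s') • a‖ ≤ q`.  With
`αrs = min (r^2 ‖x k‖^2 - p^2 + s^2) / (2 r s ‖x k‖)` and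
`βrs = min (r'^2 ‖x k‖^2 - q^2 + s'^2) / (2 r' s' ‖x k‖)`, one has
`(αrs^2 + βrs^2)^{1/2} * ∑ ‖x k‖ ≤ ‖∑ x k‖` with equality iff
`∑ x k = (αrs + i βrs) • ((∑ ‖x k‖) • a)`. -/
theorem stmt1 {H : Type*} [NormedAddCommGroup H] [InnerProductSpace ℂ H]
    {n : ℕ} {a : H} (ha : ‖a‖ = 1) (x : Fin n → H) (hx : ∀ k, x k ≠ 0)
    {r r' s s' p q α αrs βrs : ℝ}
    (hr : 0 < r) (hr' : 0 < r') (hs : 0 < s) (hs' : 0 < s')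
    (hp0 : 0 < p) (hq0 : 0 < q)
    (hα : IsLeast (Set.range fun k => ‖x k‖) α)
    (hp : p ≤ Real.sqrt ((r * α) ^ 2 + s ^ 2))
    (hq : q ≤ Real.sqrt ((r' * α) ^ 2 + s' ^ 2))
    (hmaxp : ∀ k, ‖(r : ℂ) • x k - (s : ℂ) • a‖ ≤ p)
    (hmaxq : ∀ k, ‖(r' : ℂ) • x k - (Complex.I * (s' : ℂ)) • a‖ ≤ q)
    (hαrs : IsLeast
      (Set.range fun k => (r ^ 2 * ‖x k‖ ^ 2 - p ^ 2 + s ^ 2) / (2 * r * s * ‖x k‖)) αrs)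
    (hβrs : IsLeast
      (Set.range fun k => (r' ^ 2 * ‖x k‖ ^ 2 - q ^ 2 + s' ^ 2) / (2 * r' * s' * ‖x k‖)) βrs) :
    Real.sqrt (αrs ^ 2 + βrs ^ 2) * ∑ k, ‖x k‖ ≤ ‖∑ k, x k‖ ∧
    (Real.sqrt (αrs ^ 2 + βrs ^ 2) * ∑ k, ‖x k‖ = ‖∑ k, x k‖ ↔
      ∑ k, x k = (((αrs : ℂ) + (βrs : ℂ) * Complex.I) * ((∑ k, ‖x k‖ : ℝ) : ℂ)) • a) := by
  have hxpos : ∀ k, (0:ℝ) < ‖x k‖ := fun k => norm_pos_iff.mpr (hx k)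
  set T : ℝ := ∑ k, ‖x k‖ with hTdef
  set S : H := ∑ k, x k with hSdef
  have hTnn : 0 ≤ T := Finset.sum_nonneg fun k _ => (hxpos k).le
  obtain ⟨j, hj⟩ := hα.1
  have hαnn : 0 ≤ α := hj ▸ norm_nonneg _
  have hαle : ∀ k, α ≤ ‖x k‖ := fun k => hα.2 ⟨k, rfl⟩
  have hp2 : p ^ 2 ≤ (r*α)^2 + s^2 := by
    have := pow_le_pow_left₀ hp0.le hp 2
    rwa [Real.sq_sqrt (by positivity)] at this
  have hq2 : q ^ 2 ≤ (r'*α)^2 + s'^2 := by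
    have := pow_le_pow_left₀ hq0.le hq 2
    rwa [Real.sq_sqrt (by positivity)] at this
  have hαrs0 : 0 ≤ αrs := by
    obtain ⟨k0, hk0⟩ := hαrs.1
    rw [← hk0]
    have h1 := hαle k0
    have h2 := hxpos k0
    have h3 : 0 ≤ r ^ 2 * ‖x k0‖ ^ 2 - p ^ 2 + s ^ 2 := by
      nlinarith [mul_le_mul_of_nonneg_left (pow_le_pow_left₀ hαnn h1 2) (sq_nonneg r)]
    exact div_nonneg h3 (by positivity)
  have hβrs0 : 0 ≤ βrs := by
    obtain ⟨k0, hk0⟩ := hβrs.1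
    rw [← hk0]
    have h1 := hαle k0
    have h2 := hxpos k0
    have h3 : 0 ≤ r' ^ 2 * ‖x k0‖ ^ 2 - q ^ 2 + s' ^ 2 := by
      nlinarith [mul_le_mul_of_nonneg_left (pow_le_pow_left₀ hαnn h1 2) (sq_nonneg r')]
    exact div_nonneg h3 (by positivity)
  have keyRe : ∀ k, αrs * ‖x k‖ ≤ (⟪a, x k⟫C).re := by
    intro k
    have h1 : ‖(r:ℂ) • x k - (s:ℂ) • a‖^2 ≤ p^2 :=
      pow_le_pow_left₀ (norm_nonneg _) (hmaxp k) 2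
    rw [norm_sub_sq (𝕜 := ℂ)] at h1
    simp only [RCLike.re_to_complex] at h1
    have e1 : (⟪(r:ℂ) • x k, (s:ℂ) • a⟫C).re = r * s * (⟪a, x k⟫C).re := by
      rw [inner_smul_left, inner_smul_right, ← inner_conj_symm a (x k)]
      simp only [Complex.conj_ofReal, Complex.mul_re, Complex.mul_im, Complex.conj_re,
        Complex.conj_im, Complex.ofReal_re, Complex.ofReal_im]
      ring
    rw [e1, norm_smul, norm_smul, Complex.norm_real, Complex.norm_real, ha,
      Real.norm_eq_abs, Real.norm_eq_abs, abs_of_pos hr, abs_of_pos hs] at h1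
    have h2 : αrs ≤ (r ^ 2 * ‖x k‖ ^ 2 - p ^ 2 + s ^ 2) / (2 * r * s * ‖x k‖) :=
      hαrs.2 ⟨k, rfl⟩
    rw [le_div_iff₀ (mul_pos (by positivity) (hxpos k))] at h2
    have hk := hxpos k
    nlinarith [mul_pos hr hs, mul_pos (mul_pos hr hs) hk]
  have keyIm : ∀ k, βrs * ‖x k‖ ≤ (⟪a, x k⟫C).im := by
    intro k
    have h1 : ‖(r':ℂ) • x k - (Complex.I * (s':ℂ)) • a‖^2 ≤ q^2 :=
      pow_le_pow_left₀ (norm_nonneg _) (hmaxq k) 2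
    rw [norm_sub_sq (𝕜 := ℂ)] at h1
    simp only [RCLike.re_to_complex] at h1
    have e1 : (⟪(r':ℂ) • x k, (Complex.I * (s':ℂ)) • a⟫C).re
        = r' * s' * (⟪a, x k⟫C).im := by
      rw [inner_smul_left, inner_smul_right, ← inner_conj_symm a (x k)]
      simp only [Complex.conj_ofReal, Complex.mul_re, Complex.mul_im, Complex.conj_re,
        Complex.conj_im, Complex.ofReal_re, Complex.ofReal_im, Complex.I_re, Complex.I_im]
      ring
    rw [e1, norm_smul, norm_smul, Complex.norm_real, ha] at h1
    have e2 : ‖Complex.I * (s':ℂ)‖ = s' := by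
      simp [abs_of_pos hs']
    rw [e2, Real.norm_eq_abs, abs_of_pos hr'] at h1
    have h2 : βrs ≤ (r' ^ 2 * ‖x k‖ ^ 2 - q ^ 2 + s' ^ 2) / (2 * r' * s' * ‖x k‖) :=
      hβrs.2 ⟨k, rfl⟩
    rw [le_div_iff₀ (mul_pos (by positivity) (hxpos k))] at h2
    have hk := hxpos k
    nlinarith [mul_pos hr' hs', mul_pos (mul_pos hr' hs') hk]
  set z : ℂ := ⟪a, S⟫C with hzdef
  have hzsum : z = ∑ k, ⟪a, x k⟫C := by rw [hzdef, hSdef, inner_sum]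
  have hzre : αrs * T ≤ z.re := by
    rw [hzsum, Complex.re_sum, hTdef, Finset.mul_sum]
    exact Finset.sum_le_sum fun k _ => keyRe k
  have hzim : βrs * T ≤ z.im := by
    rw [hzsum, Complex.im_sum, hTdef, Finset.mul_sum]
    exact Finset.sum_le_sum fun k _ => keyIm k
  clear_value z S T
  have hαT : 0 ≤ αrs * T := mul_nonneg hαrs0 hTnn
  have hβT : 0 ≤ βrs * T := mul_nonneg hβrs0 hTnn
  have hnormz : ‖z‖^2 = z.re^2 + z.im^2 := by
    rw [Complex.sq_norm, Complex.normSq_apply]; ring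
  have habs : Real.sqrt (αrs^2+βrs^2) * T ≤ ‖z‖ := by
    have h1 : (αrs^2+βrs^2) * T^2 ≤ ‖z‖^2 := hnormz ▸ aux_sq hαT hβT hzre hzim
    calc Real.sqrt (αrs^2+βrs^2) * T = Real.sqrt ((αrs^2+βrs^2) * T^2) := by
          rw [Real.sqrt_mul (by positivity), Real.sqrt_sq hTnn]
      _ ≤ Real.sqrt (‖z‖^2) := Real.sqrt_le_sqrt h1
      _ = ‖z‖ := Real.sqrt_sq (norm_nonneg z)
  have hzS : ‖z‖ ≤ ‖S‖ := by
    have := norm_inner_le_norm (𝕜 := ℂ) a S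
    rwa [ha, one_mul, ← hzdef] at this
  refine ⟨habs.trans hzS, ⟨fun h => ?_, fun h => ?_⟩⟩
  · have h1 : ‖z‖ = ‖S‖ := le_antisymm hzS (h.symm.trans_le habs)
    have e2 : (⟪S, z • a⟫C).re = ‖z‖^2 := by
      rw [inner_smul_right, ← inner_conj_symm S a, ← hzdef]
      simp only [Complex.mul_re, Complex.conj_re, Complex.conj_im,
        Complex.sq_norm, Complex.normSq_apply]
      ring
    have hSz : S = z • a := by
      have e3 : ‖S - z • a‖^2 = ‖S‖^2 - ‖z‖^2 := by
        rw [norm_sub_sq (𝕜 := ℂ)]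
        simp only [RCLike.re_to_complex]
        rw [e2, norm_smul, ha, mul_one]
        ring
      rw [h1, sub_self] at e3
      have := pow_eq_zero_iff (n := 2) (by norm_num) |>.mp e3
      rwa [norm_eq_zero, sub_eq_zero] at this
    have hn : z.re^2 + z.im^2 = (αrs^2 + βrs^2) * T^2 := by
      rw [← hnormz, h1, ← h, mul_pow, Real.sq_sqrt (show (0:ℝ) ≤ αrs^2+βrs^2 by positivity)]
    obtain ⟨hre, him⟩ := aux_eq hαT hβT hzre hzim hn
    have hzval : z = ((αrs:ℂ) + (βrs:ℂ) * Complex.I) * ((T:ℝ):ℂ) := by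
      apply Complex.ext <;>
        simp only [hre, him, Complex.add_re, Complex.add_im, Complex.mul_re, Complex.mul_im,
          Complex.ofReal_re, Complex.ofReal_im, Complex.I_re, Complex.I_im] <;> ring
    rw [hSz, hzval]
  · rw [h, norm_smul, ha, mul_one, norm_mul, Complex.norm_real, Real.norm_eq_abs,
      abs_of_nonneg hTnn, Complex.norm_def, Complex.normSq_apply]
    congr 1
    simp only [Complex.add_re, Complex.add_im, Complex.mul_re, Complex.mul_im,
      Complex.ofReal_re, Complex.ofReal_im, Complex.I_re, Complex.I_im]
    ring
end

section
/- Let a be a unit vector in a complex inner product space H, let r, s > 0, and let x_1, …, x_n ∈ H be nonzero vectors with max{‖r x_k − s a‖ : 1 ≤ k ≤ n} ≤ s and max{‖r x_k − i s a‖ : 1 ≤ k ≤ n} ≤ s. Set α = min{‖x_k‖ : 1 ≤ k ≤ n}. Then (rα/(s√2)) · Σ_{k=1}^n ‖x_k‖ ≤ ‖Σ_{k=1}^n x_k‖, and equality holds if and only if Σ_{k=1}^n x_k = (rα(1+i)/(2s)) (Σ_{k=1}^n ‖x_k‖) a. -/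
open scoped InnerProductSpace


/-- **Corollary 2.3.** Let `a` be a unit vector in a complex inner product space `H`,
`r, s > 0`, and let `x 1, …, x n` be nonzero vectors with `max ‖r • x k - s • a‖ ≤ r`
and `max ‖r • x k - (i s) • a‖ ≤ s`.  With `α = min ‖x k‖`, one has
`(r α / (s √2)) * ∑ ‖x k‖ ≤ ‖∑ x k‖` with equality iff
`∑ x k = (r α (1 + i) / (2 s)) * (∑ ‖x k‖) • a`. -/
theorem stmt2 {H : Type*} [NormedAddCommGroup H] [InnerProductSpace ℂ H]
    {n : ℕ} {a : H} (ha : ‖a‖ = 1) (x : Fin n → H) (hx : ∀ k, x k ≠ 0)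
    {r s α : ℝ} (hr : 0 < r) (hs : 0 < s)
    (hmax1 : ∀ k, ‖(r : ℂ) • x k - (s : ℂ) • a‖ ≤ s)
    (hmax2 : ∀ k, ‖(r : ℂ) • x k - (Complex.I * (s : ℂ)) • a‖ ≤ s)
    (hα : IsLeast (Set.range fun k => ‖x k‖) α) :
    (r * α / (s * Real.sqrt 2)) * ∑ k, ‖x k‖ ≤ ‖∑ k, x k‖ ∧
    ((r * α / (s * Real.sqrt 2)) * ∑ k, ‖x k‖ = ‖∑ k, x k‖ ↔
      ∑ k, x k =
        (((r : ℂ) * (α : ℂ) * (1 + Complex.I) / (2 * (s : ℂ))) * ((∑ k, ‖x k‖ : ℝ) : ℂ)) • a) := by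
  have sqrt2_pos : (0:ℝ) < Real.sqrt 2 := by positivity
  have hs2 : Real.sqrt 2 * Real.sqrt 2 = 2 := Real.mul_self_sqrt (by norm_num)
  obtain ⟨⟨k0, hk0⟩, hle⟩ := hα
  have hα_pos : 0 < α := hk0 ▸ norm_pos_iff.2 (hx k0)
  -- re and im bounds
  have hre : ∀ k, r * ‖x k‖ ^ 2 ≤ 2 * s * (⟪x k, a⟫_ℂ).re := by
    intro k
    have h := hmax1 k
    have h2 : ‖(r : ℂ) • x k - (s : ℂ) • a‖ ^ 2 ≤ s ^ 2 := by
      have := norm_nonneg ((r : ℂ) • x k - (s : ℂ) • a)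
      nlinarith
    rw [@norm_sub_sq ℂ, inner_smul_left, inner_smul_right] at h2
    simp only [norm_smul, Complex.norm_real, Real.norm_eq_abs, abs_of_pos hr, abs_of_pos hs,
      ha, mul_one, map_mul, Complex.conj_ofReal] at h2
    have h3 : (RCLike.re ((r:ℂ) * ((s:ℂ) * ⟪x k, a⟫_ℂ)) : ℝ) = r * (s * (⟪x k, a⟫_ℂ).re) := by
      simp [Complex.mul_re]
    rw [h3] at h2
    nlinarith
  have him : ∀ k, r * ‖x k‖ ^ 2 ≤ 2 * s * (-(⟪x k, a⟫_ℂ).im) := by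
    intro k
    have h := hmax2 k
    have h2 : ‖(r : ℂ) • x k - (Complex.I * (s : ℂ)) • a‖ ^ 2 ≤ s ^ 2 := by
      have := norm_nonneg ((r : ℂ) • x k - (Complex.I * (s : ℂ)) • a)
      nlinarith
    rw [@norm_sub_sq ℂ, inner_smul_left, inner_smul_right] at h2
    simp only [norm_smul, norm_mul, Complex.norm_real, Real.norm_eq_abs, abs_of_pos hr,
      abs_of_pos hs, ha, mul_one, map_mul, Complex.conj_ofReal, Complex.norm_I, one_mul] at h2
    have h3 : (RCLike.re ((r:ℂ) * (Complex.I * (s:ℂ) * ⟪x k, a⟫_ℂ)) : ℝ)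
        = r * (s * (-(⟪x k, a⟫_ℂ).im)) := by
      simp [Complex.mul_re, Complex.mul_im]
    rw [h3] at h2
    nlinarith
  -- the rotated unit vector
  set b : H := (((1 : ℂ) + Complex.I) / (Real.sqrt 2 : ℂ)) • a with hb
  have hnorm_coef : ‖((1 : ℂ) + Complex.I) / (Real.sqrt 2 : ℂ)‖ = 1 := by
    rw [norm_div, Complex.norm_real, Real.norm_eq_abs, abs_of_pos sqrt2_pos]
    rw [show (1:ℂ) + Complex.I = Complex.mk 1 1 from by simp [Complex.ext_iff]]
    rw [Complex.norm_def, Complex.normSq_mk]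
    rw [show (1:ℝ)*1 + 1*1 = 2 by norm_num]
    field_simp
  have hnb : ‖b‖ = 1 := by rw [hb, norm_smul, hnorm_coef, ha, one_mul]
  set c : ℝ := r * α / (s * Real.sqrt 2) with hc
  have hc_pos : 0 < c := by positivity
  -- per-term bound: c * ‖x k‖ ≤ re ⟪x k, b⟫
  have hkey : ∀ k, c * ‖x k‖ ≤ (⟪x k, b⟫_ℂ).re := by
    intro k
    have hreb : (⟪x k, b⟫_ℂ).re = ((⟪x k, a⟫_ℂ).re - (⟪x k, a⟫_ℂ).im) / Real.sqrt 2 := by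
      rw [hb, inner_smul_right, div_mul_eq_mul_div, Complex.div_ofReal_re]
      congr 1
      simp [add_mul, Complex.mul_re]
      ring
    rw [hreb, hc, le_div_iff₀ sqrt2_pos]
    have h1 := hre k
    have h2 := him k
    have hxk : α ≤ ‖x k‖ := hle ⟨k, rfl⟩
    have e1 : r * α / (s * Real.sqrt 2) * ‖x k‖ * Real.sqrt 2 = r * α * ‖x k‖ / s := by
      field_simp
    rw [e1, div_le_iff₀ hs]
    nlinarith [mul_le_mul_of_nonneg_left hxk (by positivity : (0:ℝ) ≤ r * ‖x k‖)]
  -- sum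
  set S : H := ∑ k, x k with hS
  set T : ℝ := ∑ k, ‖x k‖ with hT
  have hT_nonneg : 0 ≤ T := Finset.sum_nonneg fun k _ => norm_nonneg _
  have hsum : c * T ≤ (⟪S, b⟫_ℂ).re := by
    rw [hS, hT, Finset.mul_sum, sum_inner, Complex.re_sum]
    exact Finset.sum_le_sum fun k _ => hkey k
  have hub : (⟪S, b⟫_ℂ).re ≤ ‖S‖ := by
    calc (⟪S, b⟫_ℂ).re ≤ ‖S‖ * ‖b‖ := re_inner_le_norm (𝕜 := ℂ) S b
    _ = ‖S‖ := by rw [hnb, mul_one]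
  have hmain : c * T ≤ ‖S‖ := hsum.trans hub
  -- coefficient identity
  have hcoef : (((r : ℂ) * (α : ℂ) * (1 + Complex.I) / (2 * (s : ℂ))) * (T : ℂ))
      = ((c * T : ℝ) : ℂ) * (((1 : ℂ) + Complex.I) / (Real.sqrt 2 : ℂ)) := by
    rw [hc]
    have h2 : ((Real.sqrt 2 : ℝ) : ℂ) * ((Real.sqrt 2 : ℝ) : ℂ) = 2 := by
      rw [← Complex.ofReal_mul, hs2]; norm_num
    have hsne : ((s:ℝ):ℂ) ≠ 0 := by exact_mod_cast hs.ne'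
    have hs2ne : ((Real.sqrt 2 : ℝ) : ℂ) ≠ 0 := by exact_mod_cast sqrt2_pos.ne'
    push_cast
    field_simp
    ring_nf
    rw [show ((Real.sqrt 2:ℝ):ℂ)^2 = ((Real.sqrt 2:ℝ):ℂ) * ((Real.sqrt 2:ℝ):ℂ) from sq _]
    rw [h2]
  have htarget : ((((r : ℂ) * (α : ℂ) * (1 + Complex.I) / (2 * (s : ℂ))) * (T : ℂ)) • a)
      = ((c * T : ℝ) : ℂ) • b := by
    rw [hcoef, hb, smul_smul]
  constructor
  · exact hmain
  constructor
  · -- forward: equality implies S = target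
    intro heq
    have hre_eq : (⟪S, b⟫_ℂ).re = ‖S‖ := le_antisymm hub (heq ▸ hsum)
    have hzero : ‖S - ((‖S‖ : ℝ) : ℂ) • b‖ ^ 2 = 0 := by
      rw [@norm_sub_sq ℂ, inner_smul_right]
      simp only [norm_smul, Complex.norm_real, Real.norm_eq_abs, abs_norm, hnb, mul_one]
      have : (RCLike.re (((‖S‖:ℝ):ℂ) * ⟪S, b⟫_ℂ) : ℝ) = ‖S‖ * (⟪S, b⟫_ℂ).re := by
        simp [Complex.mul_re]
      rw [this, hre_eq]
      ring
    have hSb : S = ((‖S‖ : ℝ) : ℂ) • b := by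
      have h0 := (pow_eq_zero_iff (by norm_num : (2:ℕ) ≠ 0)).mp hzero
      exact sub_eq_zero.mp (norm_eq_zero.mp h0)
    rw [htarget, heq]
    exact hSb
  · -- backward
    intro heq
    rw [heq, htarget, norm_smul, Complex.norm_real, Real.norm_eq_abs,
      abs_of_nonneg (by positivity), hnb, mul_one]
end

section
/- Let a be a unit vector in a real or complex inner product space H, let r, s > 0, and let x_1, …, x_n ∈ H be nonzero vectors with α = min{‖x_k‖ : 1 ≤ k ≤ n} and max{‖r x_k − s a‖ : 1 ≤ k ≤ n} ≤ p < ((rα)² + s²)^{1/2}. Define α_{r,s} = min{(r²‖x_k‖² − p² + s²)/(2rs‖x_k‖) : 1 ≤ k ≤ n}. Then α_{r,s} · Σ_{k=1}^n ‖x_k‖ ≤ ‖Σ_{k=1}^n x_k‖, and equality holds if and only if Σ_{k=1}^n x_k = α_{r,s} (Σ_{k=1}^n ‖x_k‖) a. -/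
/-- **Theorem 2.4.** Let `a` be a unit vector in a real or complex inner product space `H`,
`r, s > 0`, `x 1, …, x n` nonzero vectors with `α = min ‖x k‖` and
`max ‖r • x k - s • a‖ ≤ p < ((r α)^2 + s^2)^{1/2}`.  With
`αrs = min (r^2 ‖x k‖^2 - p^2 + s^2) / (2 r s ‖x k‖)` one has
`αrs * ∑ ‖x k‖ ≤ ‖∑ x k‖`, with equality iff `∑ x k = αrs * (∑ ‖x k‖) • a`. -/
theorem stmt3 {𝕜 H : Type*} [RCLike 𝕜] [NormedAddCommGroup H] [InnerProductSpace 𝕜 H]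
    {n : ℕ} {a : H} (ha : ‖a‖ = 1) (x : Fin n → H) (hx : ∀ k, x k ≠ 0)
    {r s p α αrs : ℝ} (hr : 0 < r) (hs : 0 < s)
    (hα : IsLeast (Set.range fun k => ‖x k‖) α)
    (hmax : ∀ k, ‖(r : 𝕜) • x k - (s : 𝕜) • a‖ ≤ p)
    (hp : p < Real.sqrt ((r * α) ^ 2 + s ^ 2))
    (hαrs : IsLeast
      (Set.range fun k => (r ^ 2 * ‖x k‖ ^ 2 - p ^ 2 + s ^ 2) / (2 * r * s * ‖x k‖)) αrs) :
    αrs * ∑ k, ‖x k‖ ≤ ‖∑ k, x k‖ ∧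
    (αrs * ∑ k, ‖x k‖ = ‖∑ k, x k‖ ↔
      ∑ k, x k = ((αrs * ∑ k, ‖x k‖ : ℝ) : 𝕜) • a) := by
  obtain ⟨k0, hk0⟩ := hα.1
  have hαpos : 0 < α := hk0 ▸ norm_pos_iff.mpr (hx k0)
  have hp0 : 0 ≤ p := le_trans (norm_nonneg _) (hmax k0)
  have hp2 : p ^ 2 < (r * α) ^ 2 + s ^ 2 := by
    nlinarith [Real.sq_sqrt (by positivity : (0:ℝ) ≤ (r*α)^2 + s^2),
      Real.sqrt_nonneg ((r*α)^2+s^2)]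
  have hαle : ∀ k, α ≤ ‖x k‖ := fun k => hα.2 ⟨k, rfl⟩
  have hxpos : ∀ k, 0 < ‖x k‖ := fun k => norm_pos_iff.mpr (hx k)
  have hnum : ∀ k, 0 < r ^ 2 * ‖x k‖ ^ 2 - p ^ 2 + s ^ 2 := by
    intro k
    have h := pow_le_pow_left₀ hαpos.le (hαle k) 2
    nlinarith [sq_nonneg r, mul_pos hr hr]
  have hαrspos : 0 < αrs := by
    obtain ⟨k2, hk2⟩ := hαrs.1
    rw [← hk2]
    have := hxpos k2
    exact div_pos (hnum k2) (by positivity)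
  have key : ∀ k, αrs * ‖x k‖ ≤ RCLike.re (inner 𝕜 (x k) a) := by
    intro k
    have h1 := hmax k
    have h2 : ‖(r:𝕜) • x k - (s:𝕜) • a‖ ^ 2 ≤ p ^ 2 := by
      nlinarith [norm_nonneg ((r:𝕜) • x k - (s:𝕜) • a)]
    rw [norm_sub_sq (𝕜 := 𝕜)] at h2
    simp only [inner_smul_left, inner_smul_right, norm_smul, RCLike.norm_ofReal,
      RCLike.conj_ofReal, ← RCLike.ofReal_mul, RCLike.re_ofReal_mul] at h2
    have hc : αrs ≤ (r ^ 2 * ‖x k‖ ^ 2 - p ^ 2 + s ^ 2) / (2 * r * s * ‖x k‖) :=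
      hαrs.2 ⟨k, rfl⟩
    have hc' : αrs * (2 * r * s * ‖x k‖) ≤ r ^ 2 * ‖x k‖ ^ 2 - p ^ 2 + s ^ 2 :=
      (le_div_iff₀ (by have := hxpos k; positivity)).mp hc
    have hra : |r| = r := abs_of_pos hr
    have hsa : |s| = s := abs_of_pos hs
    rw [hra, hsa, ha] at h2
    nlinarith [hxpos k, mul_pos hr hs]
  have hsum : αrs * ∑ k, ‖x k‖ ≤ RCLike.re (inner 𝕜 (∑ k, x k) a) := by
    rw [Finset.mul_sum, sum_inner, map_sum]
    exact Finset.sum_le_sum fun k _ => key k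
  have hre_le : RCLike.re (inner 𝕜 (∑ k, x k) a) ≤ ‖∑ k, x k‖ := by
    have := re_inner_le_norm (𝕜 := 𝕜) (∑ k, x k) a
    rwa [ha, mul_one] at this
  have main : αrs * ∑ k, ‖x k‖ ≤ ‖∑ k, x k‖ := hsum.trans hre_le
  refine ⟨main, ?_, ?_⟩
  · intro h
    rw [h]
    have hre : RCLike.re (inner 𝕜 (∑ k, x k) a) = ‖∑ k, x k‖ :=
      le_antisymm hre_le (h ▸ hsum)
    have hz : ‖(∑ k, x k) - ((‖∑ k, x k‖ : ℝ) : 𝕜) • a‖ ^ 2 = 0 := by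
      rw [norm_sub_sq (𝕜 := 𝕜)]
      simp only [inner_smul_right, norm_smul, RCLike.norm_ofReal, RCLike.re_ofReal_mul,
        RCLike.mul_re, RCLike.ofReal_re, RCLike.ofReal_im]
      rw [ha, hre, abs_of_nonneg (norm_nonneg _)]
      ring
    have := sub_eq_zero.mp (by
      have := pow_eq_zero_iff (n := 2) (by norm_num) |>.mp hz
      exact norm_eq_zero.mp this)
    exact this
  · intro h
    rw [h, norm_smul, RCLike.norm_ofReal, ha, mul_one, abs_of_nonneg]
    have : 0 ≤ ∑ k, ‖x k‖ := Finset.sum_nonneg fun k _ => norm_nonneg _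
    positivity
end

section
/- Let a be a unit vector in a real or complex inner product space H, let r, s > 0, and let x_1, …, x_n ∈ H be nonzero vectors with Σ_{k=1}^n x_k = 0. Then √(r²α² + s²) ≤ max{‖r x_k − s a‖ : 1 ≤ k ≤ n}, where α = min{‖x_k‖ : 1 ≤ k ≤ n}. -/
/-- **Theorem 2.5.** Let `a` be a unit vector in a real or complex inner product space `H`,
`r, s > 0`, and let `x 1, …, x n` be nonzero vectors with `∑ x k = 0`.  Then
`√(r^2 α^2 + s^2) ≤ max ‖r • x k - s • a‖`, where `α = min ‖x k‖`. -/
theorem stmt4 {𝕜 H : Type*} [RCLike 𝕜] [NormedAddCommGroup H] [InnerProductSpace 𝕜 H]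
    {n : ℕ} {a : H} (ha : ‖a‖ = 1) (x : Fin n → H) (hx : ∀ k, x k ≠ 0)
    {r s α M : ℝ} (hr : 0 < r) (hs : 0 < s)
    (hsum : ∑ k, x k = 0)
    (hα : IsLeast (Set.range fun k => ‖x k‖) α)
    (hM : IsGreatest (Set.range fun k => ‖(r : 𝕜) • x k - (s : 𝕜) • a‖) M) :
    Real.sqrt (r ^ 2 * α ^ 2 + s ^ 2) ≤ M := by
  obtain ⟨⟨k0, hk0⟩, hαlb⟩ := hα
  haveI : Nonempty (Fin n) := ⟨k0⟩
  have hsum' : ∑ k, RCLike.re ((inner 𝕜 a (x k))) = 0 := by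
    rw [← map_sum, ← inner_sum, hsum, inner_zero_right, map_zero]
  have key : ∃ k, RCLike.re ((inner 𝕜 a (x k))) ≤ 0 := by
    by_contra h
    push_neg at h
    have := Finset.sum_pos (fun k _ => h k) Finset.univ_nonempty
    rw [hsum'] at this
    exact lt_irrefl 0 this
  obtain ⟨k, hk⟩ := key
  have hαle : α ≤ ‖x k‖ := hαlb ⟨k, rfl⟩
  have hα0 : 0 ≤ α := hk0 ▸ norm_nonneg _
  have hexp : ‖(r : 𝕜) • x k - (s : 𝕜) • a‖ ^ 2
      = r ^ 2 * ‖x k‖ ^ 2 - 2 * (r * s) * RCLike.re ((inner 𝕜 a (x k))) + s ^ 2 := by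
    rw [@norm_sub_sq 𝕜, inner_smul_left, inner_smul_right, norm_smul, norm_smul]
    simp [RCLike.norm_ofReal, abs_of_pos hr, abs_of_pos hs, ha, RCLike.conj_ofReal,
      ← RCLike.ofReal_mul, RCLike.ofReal_re, RCLike.mul_re, RCLike.ofReal_im]
    rw [show RCLike.re ((inner 𝕜 (x k) a)) = RCLike.re ((inner 𝕜 a (x k))) from inner_re_symm _ _]
    ring
  have hbound : r ^ 2 * α ^ 2 + s ^ 2 ≤ ‖(r : 𝕜) • x k - (s : 𝕜) • a‖ ^ 2 := by
    rw [hexp]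
    have h1 : α ^ 2 ≤ ‖x k‖ ^ 2 := pow_le_pow_left₀ hα0 hαle 2
    nlinarith [mul_le_mul_of_nonneg_left h1 (sq_nonneg r),
      mul_nonneg (mul_pos hr hs).le (neg_nonneg.2 hk)]
  calc Real.sqrt (r ^ 2 * α ^ 2 + s ^ 2) ≤ Real.sqrt (‖(r : 𝕜) • x k - (s : 𝕜) • a‖ ^ 2) :=
        Real.sqrt_le_sqrt hbound
    _ = ‖(r : 𝕜) • x k - (s : 𝕜) • a‖ := Real.sqrt_sq (norm_nonneg _)
    _ ≤ M := hM.2 ⟨k, rfl⟩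
end

section
/- Let a_1, …, a_m be orthonormal vectors in a complex inner product space H, let M_t ≥ m_t > 0 and L_t ≥ ℓ_t > 0 for 1 ≤ t ≤ m, and let x_1, …, x_n ∈ H be nonzero vectors satisfying ‖x_k − ((m_t + M_t)/2) a_t‖ ≤ (M_t − m_t)/2 and ‖x_k − ((L_t + ℓ_t)/2) i a_t‖ ≤ (L_t − ℓ_t)/2 for all 1 ≤ k ≤ n and 1 ≤ t ≤ m. Define α_{m_t,M_t} = min{(‖x_k‖² + m_t M_t)/((m_t + M_t)‖x_k‖) : 1 ≤ k ≤ n} and α_{ℓ_t,L_t} = min{(‖x_k‖² + ℓ_t L_t)/((ℓ_t + L_t)‖x_k‖) : 1 ≤ k ≤ n}. Then (Σ_{t=1}^m (α_{m_t,M_t}² + α_{ℓ_t,L_t}²))^{1/2} · Σ_{k=1}^n ‖x_k‖ ≤ ‖Σ_{k=1}^n x_k‖, and equality holds if and only if Σ_{k=1}^n x_k = (Σ_{k=1}^n ‖x_k‖) · Σ_{t=1}^m (α_{m_t,M_t} + i α_{ℓ_t,L_t}) a_t. -/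
open Complex in
lemma aux26 {H : Type*} [NormedAddCommGroup H] [InnerProductSpace ℂ H]
    (a x : H) (hna : ‖a‖ = 1) {p q : ℝ} (hp : 0 < p) (hpq : p ≤ q)
    (h : ‖x - (((p + q) / 2 : ℝ) : ℂ) • a‖ ≤ (q - p) / 2) :
    ‖x‖ ^ 2 + p * q ≤ (p + q) * (inner ℂ a x : ℂ).re := by
  have h2 : ‖x - (((p + q) / 2 : ℝ) : ℂ) • a‖ ^ 2 ≤ ((q - p) / 2) ^ 2 :=
    pow_le_pow_left₀ (norm_nonneg _) h 2
  rw [@norm_sub_sq ℂ] at h2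
  rw [inner_smul_right] at h2
  have hn : ‖(((p + q) / 2 : ℝ) : ℂ) • a‖ = (p + q) / 2 := by
    rw [norm_smul, hna, Complex.norm_real, mul_one, Real.norm_eq_abs, abs_of_pos (by linarith)]
  rw [hn] at h2
  have hsym : (inner ℂ x a : ℂ).re = (inner ℂ a x : ℂ).re := by
    rw [← inner_conj_symm a x, Complex.conj_re]
  have hre : RCLike.re ((((p + q) / 2 : ℝ) : ℂ) * (inner ℂ x a : ℂ)) =
      (p + q) / 2 * (inner ℂ a x : ℂ).re := by
    simp [Complex.mul_re, hsym]
  rw [hre] at h2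
  nlinarith

set_option maxHeartbeats 1000000 in
/-- **Theorem 2.6.** Let `a 1, …, a m` be orthonormal vectors in a complex inner product
space `H`, `M t ≥ m t > 0`, `L t ≥ l t > 0`, and let `x 1, …, x n` be nonzero vectors with
`‖x k - ((m t + M t)/2) • a t‖ ≤ (M t - m t)/2` and
`‖x k - ((L t + l t)/2) • (i • a t)‖ ≤ (L t - l t)/2` for all `k, t`.  With
`αM t = min (‖x k‖^2 + m t * M t) / ((m t + M t) * ‖x k‖)` and
`αL t = min (‖x k‖^2 + l t * L t) / ((l t + L t) * ‖x k‖)`, one has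
`(∑ t, (αM t)^2 + (αL t)^2)^{1/2} * ∑ ‖x k‖ ≤ ‖∑ x k‖` with equality iff
`∑ x k = (∑ ‖x k‖) • ∑ t, (αM t + i * αL t) • a t`. -/
theorem stmt5 {H : Type*} [NormedAddCommGroup H] [InnerProductSpace ℂ H]
    {m n : ℕ} {a : Fin m → H} (ha : Orthonormal ℂ a)
    (mt Mt lt Lt : Fin m → ℝ)
    (hm : ∀ t, 0 < mt t) (hmM : ∀ t, mt t ≤ Mt t)
    (hl : ∀ t, 0 < lt t) (hlL : ∀ t, lt t ≤ Lt t)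
    (x : Fin n → H) (hx : ∀ k, x k ≠ 0)
    (h1 : ∀ k t, ‖x k - (((mt t + Mt t) / 2 : ℝ) : ℂ) • a t‖ ≤ (Mt t - mt t) / 2)
    (h2 : ∀ k t,
      ‖x k - ((((Lt t + lt t) / 2 : ℝ) : ℂ) * Complex.I) • a t‖ ≤ (Lt t - lt t) / 2)
    (αM αL : Fin m → ℝ)
    (hαM : ∀ t, IsLeast
      (Set.range fun k => (‖x k‖ ^ 2 + mt t * Mt t) / ((mt t + Mt t) * ‖x k‖)) (αM t))
    (hαL : ∀ t, IsLeast
      (Set.range fun k => (‖x k‖ ^ 2 + lt t * Lt t) / ((lt t + Lt t) * ‖x k‖)) (αL t)) :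
    Real.sqrt (∑ t, ((αM t) ^ 2 + (αL t) ^ 2)) * ∑ k, ‖x k‖ ≤ ‖∑ k, x k‖ ∧
    (Real.sqrt (∑ t, ((αM t) ^ 2 + (αL t) ^ 2)) * ∑ k, ‖x k‖ = ‖∑ k, x k‖ ↔
      ∑ k, x k =
        ((∑ k, ‖x k‖ : ℝ) : ℂ) • ∑ t, ((αM t : ℂ) + (αL t : ℂ) * Complex.I) • a t) := by
  classical
  have hn0 : ∀ k, (0:ℝ) < ‖x k‖ := fun k => norm_pos_iff.mpr (hx k)
  set S : H := ∑ k, x k with hS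
  set N : ℝ := ∑ k, ‖x k‖ with hN
  have hNnn : 0 ≤ N := Finset.sum_nonneg fun k _ => norm_nonneg _
  set c2 : ℝ := ∑ t, ((αM t) ^ 2 + (αL t) ^ 2) with hc2def
  have hc2nn : 0 ≤ c2 := Finset.sum_nonneg fun t _ => by positivity
  set e : H := ∑ t, ((αM t : ℂ) + (αL t : ℂ) * Complex.I) • a t with he
  -- nonnegativity of the alphas
  have hαMnn : ∀ t, 0 ≤ αM t := by
    intro t
    obtain ⟨k, hk⟩ := (hαM t).1
    have h0 := hn0 k
    have h1' := hm t
    have h2' := (hm t).trans_le (hmM t)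
    rw [← hk]
    apply div_nonneg <;> nlinarith
  have hαLnn : ∀ t, 0 ≤ αL t := by
    intro t
    obtain ⟨k, hk⟩ := (hαL t).1
    have h0 := hn0 k
    have h1' := hl t
    have h2' := (hl t).trans_le (hlL t)
    rw [← hk]
    apply div_nonneg <;> nlinarith
  -- key pointwise estimates
  have hkeyM : ∀ k t, αM t * ‖x k‖ ≤ (inner ℂ (a t) (x k) : ℂ).re := by
    intro k t
    have hA := aux26 (a t) (x k) (ha.1 t) (hm t) (hmM t) (h1 k t)
    have hle : αM t ≤ (‖x k‖ ^ 2 + mt t * Mt t) / ((mt t + Mt t) * ‖x k‖) :=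
      (hαM t).2 ⟨k, rfl⟩
    have hden : 0 < (mt t + Mt t) * ‖x k‖ := by
      have := hn0 k; have := hm t; have := hmM t; nlinarith
    rw [le_div_iff₀ hden] at hle
    have hpq : 0 < mt t + Mt t := by have := hm t; have := hmM t; linarith
    nlinarith
  have hkeyL : ∀ k t, αL t * ‖x k‖ ≤ (inner ℂ (a t) (x k) : ℂ).im := by
    intro k t
    have hia : ‖Complex.I • a t‖ = 1 := by
      rw [norm_smul, ha.1 t, Complex.norm_I, one_mul]
    have hh : ‖x k - (((lt t + Lt t) / 2 : ℝ) : ℂ) • (Complex.I • a t)‖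
        ≤ (Lt t - lt t) / 2 := by
      rw [smul_smul]
      have := h2 k t
      rw [add_comm (lt t) (Lt t)] at *
      convert this using 4
      try ring
    have hA := aux26 (Complex.I • a t) (x k) hia (hl t) (hlL t) hh
    have him : (inner ℂ (Complex.I • a t) (x k) : ℂ).re = (inner ℂ (a t) (x k) : ℂ).im := by
      rw [inner_smul_left]
      simp [Complex.mul_re]
    rw [him] at hA
    have hle : αL t ≤ (‖x k‖ ^ 2 + lt t * Lt t) / ((lt t + Lt t) * ‖x k‖) :=
      (hαL t).2 ⟨k, rfl⟩
    have hden : 0 < (lt t + Lt t) * ‖x k‖ := by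
      have := hn0 k; have := hl t; have := hlL t; nlinarith
    rw [le_div_iff₀ hden] at hle
    have hpq : 0 < lt t + Lt t := by have := hl t; have := hlL t; linarith
    nlinarith
  -- norm of e
  have hE : ‖e‖ ^ 2 = c2 := by
    have hi := ha.inner_sum (fun t => ((αM t : ℂ) + (αL t : ℂ) * Complex.I))
      (fun t => ((αM t : ℂ) + (αL t : ℂ) * Complex.I)) Finset.univ
    rw [← inner_self_eq_norm_sq (𝕜 := ℂ) e, he, hi]
    rw [hc2def]
    rw [RCLike.re_to_complex, Complex.re_sum]
    refine Finset.sum_congr rfl fun t _ => ?_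
    have : (starRingEnd ℂ) ((αM t : ℂ) + (αL t : ℂ) * Complex.I) *
        ((αM t : ℂ) + (αL t : ℂ) * Complex.I) = Complex.normSq ((αM t : ℂ) + (αL t : ℂ) * Complex.I) := by
      rw [Complex.normSq_eq_conj_mul_self]
    rw [this, Complex.normSq_add_mul_I]
    simp [← Complex.ofReal_pow]
  have hnorme : ‖e‖ = Real.sqrt c2 := by
    rw [← hE, Real.sqrt_sq (norm_nonneg e)]
  -- the main inner product estimate
  have hk : ∀ k, c2 * ‖x k‖ ≤ (inner ℂ e (x k) : ℂ).re := by
    intro k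
    rw [he, sum_inner, Complex.re_sum]
    rw [hc2def, Finset.sum_mul]
    refine Finset.sum_le_sum fun t _ => ?_
    rw [inner_smul_left]
    have hre : ((starRingEnd ℂ) ((αM t : ℂ) + (αL t : ℂ) * Complex.I) *
        (inner ℂ (a t) (x k) : ℂ)).re =
        αM t * (inner ℂ (a t) (x k) : ℂ).re + αL t * (inner ℂ (a t) (x k) : ℂ).im := by
      simp [Complex.mul_re]
      try ring
    rw [hre]
    have := hkeyM k t
    have := hkeyL k t
    have := hαMnn t
    have := hαLnn t
    nlinarith
  have hES : c2 * N ≤ (inner ℂ e S : ℂ).re := by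
    rw [hS, inner_sum, Complex.re_sum, hN, Finset.mul_sum]
    exact Finset.sum_le_sum fun k _ => hk k
  have hCS : (inner ℂ e S : ℂ).re ≤ ‖e‖ * ‖S‖ := by
    have := re_inner_le_norm (𝕜 := ℂ) e S
    rwa [RCLike.re_to_complex] at this
  have hsq : Real.sqrt c2 * Real.sqrt c2 = c2 := Real.mul_self_sqrt hc2nn
  have key : Real.sqrt c2 * N ≤ ‖S‖ := by
    rcases eq_or_lt_of_le (Real.sqrt_nonneg c2) with h0 | h0
    · rw [← h0]; simpa using norm_nonneg S
    · rw [hnorme] at hCS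
      nlinarith [norm_nonneg S]
  refine ⟨key, ?_, ?_⟩
  · intro heq
    by_cases hc : c2 = 0
    · have hz : ∀ t ∈ Finset.univ, (αM t) ^ 2 + (αL t) ^ 2 = 0 := by
        rw [← Finset.sum_eq_zero_iff_of_nonneg fun t _ => by positivity]
        rw [← hc2def]; exact hc
      have he0 : e = 0 := by
        rw [he]
        refine Finset.sum_eq_zero fun t _ => ?_
        have h := hz t (Finset.mem_univ t)
        have hM0 : αM t = 0 := by nlinarith
        have hL0 : αL t = 0 := by nlinarith
        simp [hM0, hL0]
      have hS0 : S = 0 := by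
        have : ‖S‖ = 0 := by rw [← heq, hc]; simp
        exact norm_eq_zero.mp this
      rw [hS0, he0, smul_zero]
    · have hcpos : 0 < c2 := lt_of_le_of_ne hc2nn (Ne.symm hc)
      have hs : 0 < Real.sqrt c2 := Real.sqrt_pos.mpr hcpos
      have henz : e ≠ 0 := by
        intro h0
        rw [h0, norm_zero] at hnorme
        exact absurd hnorme.symm (ne_of_gt hs)
      have h3 : (inner ℂ e S : ℂ).re = ‖e‖ * ‖S‖ := by
        refine le_antisymm hCS ?_
        rw [hnorme, ← heq]
        nlinarith
      set z : ℂ := (inner ℂ e S : ℂ) with hz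
      have habs : ‖z‖ ≤ ‖e‖ * ‖S‖ := norm_inner_le_norm e S
      have hre_le : z.re ≤ ‖z‖ := Complex.re_le_norm _
      have habs_eq : ‖z‖ = ‖e‖ * ‖S‖ := le_antisymm habs (h3 ▸ hre_le)
      have him0 : z.im = 0 := by
        have h5 : ‖z‖ ^ 2 = z.re ^ 2 + z.im ^ 2 := by
          rw [Complex.sq_norm, Complex.normSq_apply]; ring
        have h7 : ‖z‖ = z.re := by rw [habs_eq, h3]
        have h8 : ‖z‖ ^ 2 = z.re ^ 2 := by rw [h7]
        have h6 : z.im ^ 2 = 0 := by linarith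
        clear h7 h8
        exact pow_eq_zero_iff two_ne_zero |>.mp h6
      have h4 : z = ((‖e‖ : ℂ)) * ((‖S‖ : ℂ)) := by
        apply Complex.ext
        · simpa using h3
        · simpa using him0
      have h5 : (‖S‖ : ℂ) • e = (‖e‖ : ℂ) • S := inner_eq_norm_mul_iff.mp (hz ▸ h4)
      have hne' : ((‖e‖ : ℝ) : ℂ) ≠ 0 := by
        simp only [ne_eq, Complex.ofReal_eq_zero, norm_eq_zero]
        exact henz
      have h7 := congrArg (fun v => ((‖e‖ : ℂ))⁻¹ • v) h5
      rw [inv_smul_smul₀ hne'] at h7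
      have h6 : S = ((‖S‖ / ‖e‖ : ℝ) : ℂ) • e := by
        conv_lhs => rw [← h7]
        rw [smul_smul]
        push_cast
        rw [div_eq_inv_mul]
      have h8 : ‖S‖ / ‖e‖ = N := by
        rw [hnorme, ← heq, mul_comm, mul_div_assoc, div_self (ne_of_gt hs), mul_one]
      rw [h6, h8]
  · intro heq
    rw [heq, norm_smul, Complex.norm_real, Real.norm_eq_abs, abs_of_nonneg hNnn, hnorme]
    ring
end

section
/- Let a be a unit vector in a real or complex inner product space H, let x_1, …, x_n ∈ H be nonzero vectors, and let r_1, …, r_n ≥ 0 satisfy ‖x_k‖ − Re⟨x_k, a⟩ ≤ r_k for each 1 ≤ k ≤ n. Then Σ_{k=1}^n ‖x_k‖ − ‖Σ_{k=1}^n x_k‖ ≤ Σ_{k=1}^n r_k, and equality holds if and only if Σ_{k=1}^n ‖x_k‖ ≥ Σ_{k=1}^n r_k and Σ_{k=1}^n x_k = (Σ_{k=1}^n ‖x_k‖ − Σ_{k=1}^n r_k) a. -/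
/-- **Theorem 2.7.** Let `a` be a unit vector in a real or complex inner product space `H`,
`x 1, …, x n` nonzero vectors, and `r 1, …, r n ≥ 0` with
`‖x k‖ - Re⟨x k, a⟩ ≤ r k` for each `k`.  Then
`∑ ‖x k‖ - ‖∑ x k‖ ≤ ∑ r k`, and equality holds iff `∑ ‖x k‖ ≥ ∑ r k` and
`∑ x k = (∑ ‖x k‖ - ∑ r k) • a`.  (Here `⟨x, a⟩` is Mathlib's `inner a x`.) -/
theorem stmt6 {𝕜 H : Type*} [RCLike 𝕜] [NormedAddCommGroup H] [InnerProductSpace 𝕜 H]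
    {n : ℕ} {a : H} (ha : ‖a‖ = 1) (x : Fin n → H) (hx : ∀ k, x k ≠ 0)
    (r : Fin n → ℝ) (hr : ∀ k, 0 ≤ r k)
    (h : ∀ k, ‖x k‖ - RCLike.re (inner 𝕜 a (x k) : 𝕜) ≤ r k) :
    (∑ k, ‖x k‖) - ‖∑ k, x k‖ ≤ ∑ k, r k ∧
    ((∑ k, ‖x k‖) - ‖∑ k, x k‖ = ∑ k, r k ↔
      (∑ k, r k ≤ ∑ k, ‖x k‖ ∧
        ∑ k, x k = (((∑ k, ‖x k‖) - ∑ k, r k : ℝ) : 𝕜) • a)) := by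
  set S := ∑ k, x k with hSdef
  have hre : (∑ k, ‖x k‖) - ∑ k, r k ≤ RCLike.re (inner 𝕜 a S : 𝕜) := by
    calc (∑ k, ‖x k‖) - ∑ k, r k = ∑ k, (‖x k‖ - r k) := by
          rw [Finset.sum_sub_distrib]
      _ ≤ ∑ k, RCLike.re (inner 𝕜 a (x k) : 𝕜) :=
          Finset.sum_le_sum fun k _ => by linarith [h k]
      _ = RCLike.re (inner 𝕜 a S : 𝕜) := by
          rw [hSdef, inner_sum]; exact (map_sum _ _ _).symm
  have hnle : ‖(inner 𝕜 a S : 𝕜)‖ ≤ ‖S‖ := by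
    calc ‖(inner 𝕜 a S : 𝕜)‖ ≤ ‖a‖ * ‖S‖ := norm_inner_le_norm _ _
      _ = ‖S‖ := by rw [ha, one_mul]
  have hCS : RCLike.re (inner 𝕜 a S : 𝕜) ≤ ‖S‖ :=
    le_trans (RCLike.re_le_norm _) hnle
  refine ⟨by linarith, ?_, ?_⟩
  · intro heq
    have hS : ‖S‖ = (∑ k, ‖x k‖) - ∑ k, r k := by linarith
    refine ⟨by linarith [norm_nonneg S], ?_⟩
    have hre' : RCLike.re (inner 𝕜 a S : 𝕜) = ‖S‖ := le_antisymm hCS (by linarith)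
    have hself : ((RCLike.re (inner 𝕜 a S : 𝕜) : ℝ) : 𝕜) = (inner 𝕜 a S : 𝕜) :=
      RCLike.re_eq_self_of_le (by rw [hre']; exact hnle)
    have hprod : (inner 𝕜 a S : 𝕜) = (‖a‖ : 𝕜) * (‖S‖ : 𝕜) := by
      rw [ha, RCLike.ofReal_one, one_mul, ← hself, hre']
    have := inner_eq_norm_mul_iff.mp (by exact_mod_cast hprod)
    rw [ha, RCLike.ofReal_one, one_smul] at this
    rw [← this, hS]
  · rintro ⟨hle, hEq⟩
    have hnorm : ‖S‖ = (∑ k, ‖x k‖) - ∑ k, r k := by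
      rw [hEq, norm_smul, RCLike.norm_ofReal, ha, mul_one,
        abs_of_nonneg (sub_nonneg.2 hle)]
    linarith
end

section
/- Let a be a unit vector in a real or complex inner product space H and let x_1, …, x_n ∈ H be nonzero vectors. Set α = min{‖x_k‖ : 1 ≤ k ≤ n}, let p ∈ (0, √(α² + 1)) satisfy max{‖x_k − a‖ : 1 ≤ k ≤ n} ≤ p, and define β = min{(‖x_k‖² − p² + 1)/(2‖x_k‖) : 1 ≤ k ≤ n}. Then Σ_{k=1}^n ‖x_k‖ − ‖Σ_{k=1}^n x_k‖ ≤ ((1 − β)/β) · Re⟨Σ_{k=1}^n x_k, a⟩, and equality holds if and only if Σ_{k=1}^n ‖x_k‖ ≥ ((1 − β)/β) Re⟨Σ_{k=1}^n x_k, a⟩ and Σ_{k=1}^n x_k = (Σ_{k=1}^n ‖x_k‖ − ((1 − β)/β) Re⟨Σ_{k=1}^n x_k, a⟩) a. -/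
/-- **Theorem 2.8.** Let `a` be a unit vector in a real or complex inner product space `H`,
`x 1, …, x n` nonzero vectors, `α = min ‖x k‖`, `p ∈ (0, √(α^2 + 1))` with
`max ‖x k - a‖ ≤ p`, and `β = min (‖x k‖^2 - p^2 + 1)/(2 ‖x k‖)`.  Then
`∑ ‖x k‖ - ‖∑ x k‖ ≤ ((1 - β)/β) * Re⟨∑ x k, a⟩`, with equality iff
`∑ ‖x k‖ ≥ ((1 - β)/β) * Re⟨∑ x k, a⟩` and
`∑ x k = (∑ ‖x k‖ - ((1 - β)/β) * Re⟨∑ x k, a⟩) • a`. -/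
theorem stmt7 {𝕜 H : Type*} [RCLike 𝕜] [NormedAddCommGroup H] [InnerProductSpace 𝕜 H]
    {n : ℕ} {a : H} (ha : ‖a‖ = 1) (x : Fin n → H) (hx : ∀ k, x k ≠ 0)
    {α p β : ℝ}
    (hα : IsLeast (Set.range fun k => ‖x k‖) α)
    (hp0 : 0 < p) (hp : p < Real.sqrt (α ^ 2 + 1))
    (hmax : ∀ k, ‖x k - a‖ ≤ p)
    (hβ : IsLeast (Set.range fun k => (‖x k‖ ^ 2 - p ^ 2 + 1) / (2 * ‖x k‖)) β) :
    (∑ k, ‖x k‖) - ‖∑ k, x k‖ ≤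
      (1 - β) / β * RCLike.re (inner 𝕜 a (∑ k, x k) : 𝕜) ∧
    ((∑ k, ‖x k‖) - ‖∑ k, x k‖ =
        (1 - β) / β * RCLike.re (inner 𝕜 a (∑ k, x k) : 𝕜) ↔
      ((1 - β) / β * RCLike.re (inner 𝕜 a (∑ k, x k) : 𝕜) ≤ ∑ k, ‖x k‖ ∧
        ∑ k, x k =
          (((∑ k, ‖x k‖) - (1 - β) / β * RCLike.re (inner 𝕜 a (∑ k, x k) : 𝕜) : ℝ) : 𝕜) • a)) := by
  obtain ⟨⟨k₀, hk₀⟩, hαlb⟩ := hα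
  obtain ⟨⟨k₁, hk₁⟩, hβlb⟩ := hβ
  have hx0 : ∀ k, 0 < ‖x k‖ := fun k => norm_pos_iff.mpr (hx k)
  have hα0 : 0 < α := hk₀ ▸ hx0 k₀
  have hp2 : p ^ 2 < α ^ 2 + 1 := by
    have h := (Real.lt_sqrt hp0.le).mp hp
    linarith
  have hβ0 : 0 < β := by
    rw [← hk₁]
    have h1 : α ≤ ‖x k₁‖ := hαlb ⟨k₁, rfl⟩
    have h2 := hx0 k₁
    apply div_pos (by nlinarith) (by linarith)
  have key : ∀ k, β * ‖x k‖ ≤ RCLike.re (inner 𝕜 a (x k) : 𝕜) := by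
    intro k
    have h1 : ‖x k - a‖ ^ 2 ≤ p ^ 2 := by
      have := hmax k
      nlinarith [norm_nonneg (x k - a)]
    have h2 : ‖x k - a‖ ^ 2 = ‖x k‖ ^ 2 - 2 * RCLike.re (inner 𝕜 (x k) a : 𝕜) + ‖a‖ ^ 2 :=
      norm_sub_sq _ _
    have h3 : β ≤ (‖x k‖ ^ 2 - p ^ 2 + 1) / (2 * ‖x k‖) := hβlb ⟨k, rfl⟩
    have h4 := hx0 k
    rw [le_div_iff₀ (by linarith)] at h3
    have h5 : RCLike.re (inner 𝕜 a (x k) : 𝕜) = RCLike.re (inner 𝕜 (x k) a : 𝕜) :=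
      inner_re_symm _ _
    rw [h5]
    nlinarith [ha]
  have hsum : RCLike.re (inner 𝕜 a (∑ k, x k) : 𝕜) = ∑ k, RCLike.re (inner 𝕜 a (x k) : 𝕜) := by
    rw [inner_sum, map_sum]
  have hβN : β * ∑ k, ‖x k‖ ≤ RCLike.re (inner 𝕜 a (∑ k, x k) : 𝕜) := by
    rw [hsum, Finset.mul_sum]
    exact Finset.sum_le_sum fun k _ => key k
  have hRs : RCLike.re (inner 𝕜 a (∑ k, x k) : 𝕜) ≤ ‖∑ k, x k‖ := by
    have h := re_inner_le_norm (𝕜 := 𝕜) a (∑ k, x k)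
    rwa [ha, one_mul] at h
  have hNR : (∑ k, ‖x k‖) - RCLike.re (inner 𝕜 a (∑ k, x k) : 𝕜) ≤
      (1 - β) / β * RCLike.re (inner 𝕜 a (∑ k, x k) : 𝕜) := by
    rw [div_mul_eq_mul_div, le_div_iff₀ hβ0]
    nlinarith
  refine ⟨by linarith, ?_, ?_⟩
  · intro heq
    have hsR : ‖∑ k, x k‖ = RCLike.re (inner 𝕜 a (∑ k, x k) : 𝕜) := by linarith
    refine ⟨by linarith [norm_nonneg (∑ k, x k)], ?_⟩
    have hrpos : (0:ℝ) ≤ RCLike.re (inner 𝕜 a (∑ k, x k) : 𝕜) := hsR ▸ norm_nonneg _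
    have hzero :
        ‖(∑ k, x k) - ((RCLike.re (inner 𝕜 a (∑ k, x k) : 𝕜) : ℝ) : 𝕜) • a‖ ^ 2 = 0 := by
      have he := norm_sub_sq (𝕜 := 𝕜) (∑ k, x k)
        (((RCLike.re (inner 𝕜 a (∑ k, x k) : 𝕜) : ℝ) : 𝕜) • a)
      have h6 : RCLike.re (inner 𝕜 (∑ k, x k)
          (((RCLike.re (inner 𝕜 a (∑ k, x k) : 𝕜) : ℝ) : 𝕜) • a) : 𝕜) =
          RCLike.re (inner 𝕜 a (∑ k, x k) : 𝕜) * RCLike.re (inner 𝕜 a (∑ k, x k) : 𝕜) := by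
        rw [inner_smul_right, RCLike.mul_re, RCLike.ofReal_re, RCLike.ofReal_im,
          inner_re_symm]
        ring
      have h7 : ‖((RCLike.re (inner 𝕜 a (∑ k, x k) : 𝕜) : ℝ) : 𝕜) • a‖ =
          RCLike.re (inner 𝕜 a (∑ k, x k) : 𝕜) := by
        rw [norm_smul, RCLike.norm_ofReal, ha, mul_one, abs_of_nonneg hrpos]
      rw [he, h6, h7, hsR]
      ring
    have hS : (∑ k, x k) = ((RCLike.re (inner 𝕜 a (∑ k, x k) : 𝕜) : ℝ) : 𝕜) • a := by
      rw [pow_eq_zero_iff (two_ne_zero), norm_eq_zero, sub_eq_zero] at hzero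
      exact hzero
    have hc : ((∑ k, ‖x k‖) - (1 - β) / β * RCLike.re (inner 𝕜 a (∑ k, x k) : 𝕜) : ℝ) =
        RCLike.re (inner 𝕜 a (∑ k, x k) : 𝕜) := by linarith
    rw [hc]
    exact hS
  · rintro ⟨ht, hS⟩
    have hn : ‖∑ k, x k‖ =
        (∑ k, ‖x k‖) - (1 - β) / β * RCLike.re (inner 𝕜 a (∑ k, x k) : 𝕜) := by
      conv_lhs => rw [hS]
      rw [norm_smul, RCLike.norm_ofReal, ha, mul_one, abs_of_nonneg (by linarith)]
    linarith
end

section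
/- Let a be a unit vector in a real or complex inner product space H and let x_1, …, x_n ∈ H be nonzero vectors with max{‖x_k − a‖ : 1 ≤ k ≤ n} ≤ 1. Set α = min{‖x_k‖ : 1 ≤ k ≤ n}. Then Σ_{k=1}^n ‖x_k‖ − ‖Σ_{k=1}^n x_k‖ ≤ ((2 − α)/α) · Re⟨Σ_{k=1}^n x_k, a⟩, and equality holds if and only if Σ_{k=1}^n ‖x_k‖ ≥ ((2 − α)/α) Re⟨Σ_{k=1}^n x_k, a⟩ and Σ_{k=1}^n x_k = (Σ_{k=1}^n ‖x_k‖ − ((2 − α)/α) Re⟨Σ_{k=1}^n x_k, a⟩) a. -/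
/-- **Corollary 2.9.** Let `a` be a unit vector in a real or complex inner product space `H`,
`x 1, …, x n` nonzero vectors with `max ‖x k - a‖ ≤ 1`, and `α = min ‖x k‖`.  Then
`∑ ‖x k‖ - ‖∑ x k‖ ≤ ((2 - α)/α) * Re⟨∑ x k, a⟩`, with equality iff
`∑ ‖x k‖ ≥ ((2 - α)/α) * Re⟨∑ x k, a⟩` and
`∑ x k = (∑ ‖x k‖ - ((2 - α)/α) * Re⟨∑ x k, a⟩) • a`. -/
theorem stmt8 {𝕜 H : Type*} [RCLike 𝕜] [NormedAddCommGroup H] [InnerProductSpace 𝕜 H]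
    {n : ℕ} {a : H} (ha : ‖a‖ = 1) (x : Fin n → H) (hx : ∀ k, x k ≠ 0)
    {α : ℝ} (hmax : ∀ k, ‖x k - a‖ ≤ 1)
    (hα : IsLeast (Set.range fun k => ‖x k‖) α) :
    (∑ k, ‖x k‖) - ‖∑ k, x k‖ ≤
      (2 - α) / α * RCLike.re (inner 𝕜 a (∑ k, x k) : 𝕜) ∧
    ((∑ k, ‖x k‖) - ‖∑ k, x k‖ =
        (2 - α) / α * RCLike.re (inner 𝕜 a (∑ k, x k) : 𝕜) ↔
      ((2 - α) / α * RCLike.re (inner 𝕜 a (∑ k, x k) : 𝕜) ≤ ∑ k, ‖x k‖ ∧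
        ∑ k, x k =
          (((∑ k, ‖x k‖) - (2 - α) / α * RCLike.re (inner 𝕜 a (∑ k, x k) : 𝕜) : ℝ) : 𝕜) • a)) := by
  obtain ⟨⟨j, hj⟩, hlb⟩ := hα
  have hαpos : 0 < α := hj ▸ norm_pos_iff.mpr (hx j)
  set s : H := ∑ k, x k with hs
  set S : ℝ := ∑ k, ‖x k‖ with hS
  set R : ℝ := RCLike.re (inner 𝕜 a s : 𝕜) with hR
  have hRsum : R = ∑ k, RCLike.re (inner 𝕜 (x k) a : 𝕜) := by
    rw [hR, hs, inner_sum, map_sum]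
    exact Finset.sum_congr rfl fun k _ => inner_re_symm a (x k)
  -- pointwise: α * ‖x k‖ ≤ 2 * re ⟪x k, a⟫
  have hkey : ∀ k, α * ‖x k‖ ≤ 2 * RCLike.re (inner 𝕜 (x k) a : 𝕜) := by
    intro k
    have h1 : ‖x k - a‖ ^ 2 ≤ 1 := by
      nlinarith [hmax k, norm_nonneg (x k - a)]
    rw [norm_sub_sq (𝕜 := 𝕜), ha] at h1
    have hαk : α ≤ ‖x k‖ := hlb ⟨k, rfl⟩
    nlinarith [norm_nonneg (x k)]
  have hSR : α * S ≤ 2 * R := by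
    rw [hRsum, hS, Finset.mul_sum, Finset.mul_sum]
    exact Finset.sum_le_sum fun k _ => hkey k
  have hS2 : S ≤ 2 / α * R := by
    rw [div_mul_eq_mul_div, le_div_iff₀ hαpos]
    linarith
  have hRs : R ≤ ‖s‖ := by
    calc R ≤ ‖a‖ * ‖s‖ := re_inner_le_norm a s
    _ = ‖s‖ := by rw [ha, one_mul]
  have hTsplit : (2 - α) / α * R = 2 / α * R - R := by
    field_simp
  constructor
  · rw [hTsplit]; linarith
  constructor
  · intro heq
    rw [hTsplit] at heq
    have h3 : S = 2 / α * R := by linarith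
    have h4 : ‖s‖ = R := by linarith
    constructor
    · rw [hTsplit]
      have : 0 ≤ ‖s‖ := norm_nonneg s
      linarith
    · have h5 : ‖s - ((‖s‖ : 𝕜)) • a‖ ^ 2 = 0 := by
        rw [norm_sub_sq (𝕜 := 𝕜), inner_smul_right, norm_smul]
        simp only [RCLike.mul_re, RCLike.ofReal_re, RCLike.ofReal_im, RCLike.norm_ofReal, ha,
          mul_one]
        have : RCLike.re (inner 𝕜 s a : 𝕜) = R := by rw [hR, inner_re_symm]
        rw [this]
        have hsn : 0 ≤ ‖s‖ := norm_nonneg s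
        rw [abs_of_nonneg hsn]
        nlinarith [h4]
      have h6 : s = ((‖s‖ : 𝕜)) • a := by
        have := (pow_eq_zero_iff (two_ne_zero)).mp h5
        rwa [norm_eq_zero, sub_eq_zero] at this
      have h7 : S - (2 - α) / α * R = ‖s‖ := by rw [hTsplit]; linarith
      rw [h7]; exact h6
  · rintro ⟨hle, heq2⟩
    have h7 : ‖s‖ = S - (2 - α) / α * R := by
      rw [heq2, norm_smul, ha, mul_one, RCLike.norm_ofReal, abs_of_nonneg (by linarith)]
    rw [h7]; ring
end

section
/- Let a be a unit vector in a real or complex inner product space H, let M ≥ m > 0, and let x_1, …, x_n ∈ H be nonzero vectors satisfying ‖x_k − ((m + M)/2) a‖ ≤ (M − m)/2 for every 1 ≤ k ≤ n. Define α_{m,M} = min{(‖x_k‖² + mM)/((m + M)‖x_k‖) : 1 ≤ k ≤ n}. Then Σ_{k=1}^n ‖x_k‖ − ‖Σ_{k=1}^n x_k‖ ≤ ((1 − α_{m,M})/α_{m,M}) · Re⟨Σ_{k=1}^n x_k, a⟩, and equality holds if and only if Σ_{k=1}^n ‖x_k‖ ≥ ((1 − α_{m,M})/α_{m,M}) Re⟨Σ_{k=1}^n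 x_k, a⟩ and Σ_{k=1}^n x_k = (Σ_{k=1}^n ‖x_k‖ − ((1 − α_{m,M})/α_{m,M}) Re⟨Σ_{k=1}^n x_k, a⟩) a. -/
/-- **Theorem 2.10.** Let `a` be a unit vector in a real or complex inner product space `H`,
`M ≥ m > 0`, and `x 1, …, x n` nonzero vectors with
`‖x k - ((m + M)/2) • a‖ ≤ (M - m)/2` for every `k`.  With
`αmM = min (‖x k‖^2 + m M)/((m + M) ‖x k‖)`, one has
`∑ ‖x k‖ - ‖∑ x k‖ ≤ ((1 - αmM)/αmM) * Re⟨∑ x k, a⟩`, with equality iff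
`∑ ‖x k‖ ≥ ((1 - αmM)/αmM) * Re⟨∑ x k, a⟩` and
`∑ x k = (∑ ‖x k‖ - ((1 - αmM)/αmM) * Re⟨∑ x k, a⟩) • a`. -/
theorem stmt9 {𝕜 H : Type*} [RCLike 𝕜] [NormedAddCommGroup H] [InnerProductSpace 𝕜 H]
    {n : ℕ} {a : H} (ha : ‖a‖ = 1) (x : Fin n → H) (hx : ∀ k, x k ≠ 0)
    {m M αmM : ℝ} (hm : 0 < m) (hmM : m ≤ M)
    (h : ∀ k, ‖x k - (((m + M) / 2 : ℝ) : 𝕜) • a‖ ≤ (M - m) / 2)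
    (hαmM : IsLeast
      (Set.range fun k => (‖x k‖ ^ 2 + m * M) / ((m + M) * ‖x k‖)) αmM) :
    (∑ k, ‖x k‖) - ‖∑ k, x k‖ ≤
      (1 - αmM) / αmM * RCLike.re (inner 𝕜 a (∑ k, x k) : 𝕜) ∧
    ((∑ k, ‖x k‖) - ‖∑ k, x k‖ =
        (1 - αmM) / αmM * RCLike.re (inner 𝕜 a (∑ k, x k) : 𝕜) ↔
      ((1 - αmM) / αmM * RCLike.re (inner 𝕜 a (∑ k, x k) : 𝕜) ≤ ∑ k, ‖x k‖ ∧
        ∑ k, x k =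
          (((∑ k, ‖x k‖) - (1 - αmM) / αmM * RCLike.re (inner 𝕜 a (∑ k, x k) : 𝕜) : ℝ) : 𝕜) • a)) := by
  have hmM0 : 0 < m + M := by linarith
  have hnormpos : ∀ k, 0 < ‖x k‖ := fun k => norm_pos_iff.mpr (hx k)
  -- positivity of αmM
  obtain ⟨k0, hk0⟩ := hαmM.1
  have hα : 0 < αmM := by
    rw [← hk0]
    have := hnormpos k0
    dsimp only
    exact div_pos (by nlinarith) (by nlinarith)
  -- key per-vector inequality
  have key : ∀ k, ‖x k‖ ^ 2 + m * M ≤ (m + M) * RCLike.re (inner 𝕜 a (x k) : 𝕜) := by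
    intro k
    have h1 := h k
    have h2 : ‖x k - (((m + M) / 2 : ℝ) : 𝕜) • a‖ ^ 2 ≤ ((M - m) / 2) ^ 2 :=
      pow_le_pow_left₀ (norm_nonneg _) h1 2
    rw [@norm_sub_sq 𝕜] at h2
    rw [inner_smul_right] at h2
    have hre : RCLike.re ((((m + M) / 2 : ℝ) : 𝕜) * (inner 𝕜 (x k) a : 𝕜)) =
        (m + M) / 2 * RCLike.re (inner 𝕜 (x k) a : 𝕜) := RCLike.re_ofReal_mul _ _
    rw [hre] at h2
    have hns : ‖(((m + M) / 2 : ℝ) : 𝕜) • a‖ = (m + M) / 2 := by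
      rw [norm_smul, RCLike.norm_ofReal, ha, mul_one, abs_of_nonneg (by linarith)]
    rw [hns] at h2
    have hsym : RCLike.re (inner 𝕜 (x k) a : 𝕜) = RCLike.re (inner 𝕜 a (x k) : 𝕜) :=
      inner_re_symm _ _
    rw [hsym] at h2
    nlinarith [h2]
  -- per-vector: αmM * ‖x k‖ ≤ re ⟪a, x k⟫
  have key2 : ∀ k, αmM * ‖x k‖ ≤ RCLike.re (inner 𝕜 a (x k) : 𝕜) := by
    intro k
    have hk : αmM ≤ (‖x k‖ ^ 2 + m * M) / ((m + M) * ‖x k‖) := hαmM.2 ⟨k, rfl⟩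
    have hpos : 0 < (m + M) * ‖x k‖ := mul_pos hmM0 (hnormpos k)
    rw [le_div_iff₀ hpos] at hk
    have := key k
    nlinarith [hnormpos k]
  set s := ∑ k, x k with hs
  set S := ∑ k, ‖x k‖ with hS
  set r := RCLike.re (inner 𝕜 a s : 𝕜) with hr
  have hsum : αmM * S ≤ r := by
    have : r = ∑ k, RCLike.re (inner 𝕜 a (x k) : 𝕜) := by
      rw [hr, hs, inner_sum, map_sum]
    rw [this, hS, Finset.mul_sum]
    exact Finset.sum_le_sum fun k _ => key2 k
  have hrs : r ≤ ‖s‖ := by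
    calc r ≤ ‖a‖ * ‖s‖ := re_inner_le_norm (𝕜 := 𝕜) a s
    _ = ‖s‖ := by rw [ha, one_mul]
  have hmain : S - ‖s‖ ≤ (1 - αmM) / αmM * r := by
    rw [div_mul_eq_mul_div, le_div_iff₀ hα]
    nlinarith [hsum, hrs, hα, mul_nonneg (le_of_lt hα) (sub_nonneg.mpr hrs)]
  refine ⟨hmain, ?_, ?_⟩
  · -- forward direction
    intro heq
    have hS0 : 0 ≤ S := Finset.sum_nonneg fun k _ => norm_nonneg (x k)
    have hr0 : 0 ≤ r := by nlinarith [hα, hsum, hS0]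
    have hchain : S - r ≤ (1 - αmM) / αmM * r := by
      rw [div_mul_eq_mul_div, le_div_iff₀ hα]
      nlinarith [hsum, hα]
    have hns : ‖s‖ = r := by linarith [hrs, heq, hchain]
    have hzero : s = (‖s‖ : 𝕜) • a := by
      have hsq : ‖s - (‖s‖ : 𝕜) • a‖ ^ 2 = 0 := by
        rw [@norm_sub_sq 𝕜, inner_smul_right]
        have : RCLike.re ((‖s‖ : 𝕜) * (inner 𝕜 s a : 𝕜)) =
            ‖s‖ * RCLike.re (inner 𝕜 s a : 𝕜) := RCLike.re_ofReal_mul _ _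
        rw [this, inner_re_symm]
        have hn2 : ‖(‖s‖ : 𝕜) • a‖ = ‖s‖ := by
          rw [norm_smul, RCLike.norm_ofReal, ha, mul_one, abs_of_nonneg (norm_nonneg s)]
        rw [hn2, ← hr, hns]
        ring
      have := pow_eq_zero_iff (n := 2) (by norm_num) |>.mp hsq
      have := norm_eq_zero.mp this
      rwa [sub_eq_zero] at this
    constructor
    · nlinarith [norm_nonneg s, heq]
    · have : S - (1 - αmM) / αmM * r = ‖s‖ := by linarith [heq]
      rw [this]
      exact hzero
  · -- backward direction
    rintro ⟨h1, h2⟩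
    have hnorm : ‖s‖ = S - (1 - αmM) / αmM * r := by
      rw [h2, norm_smul, RCLike.norm_ofReal, ha, mul_one,
        abs_of_nonneg (sub_nonneg.mpr h1)]
    linarith [hnorm]
end

section
/- Let a be a unit vector in a real or complex inner product space H, let r, s > 0 and p ∈ (0, s], and let x_1, x_2 ∈ H be nonzero vectors with ‖r x_k − s a‖ ≤ p for k = 1, 2. Set α_{r,s} = min{(r²‖x_k‖² − p² + s²)/(2rs‖x_k‖) : k = 1, 2}. Then (‖x_1‖‖x_2‖ − Re⟨x_1, x_2⟩) / (‖x_1‖ + ‖x_2‖)² ≤ (1/2)(1 − α_{r,s}²). -/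
set_option maxHeartbeats 1000000 in
/-- **Theorem 3.1 (reverse Schwarz).** Let `a` be a unit vector in a real or complex inner
product space `H`, `r, s > 0`, `p ∈ (0, s]`, and let `x₁, x₂` be nonzero vectors with
`‖r • xₖ - s • a‖ ≤ p` for `k = 1, 2`.  With
`αrs = min ((r^2 ‖x₁‖^2 - p^2 + s^2)/(2 r s ‖x₁‖)) ((r^2 ‖x₂‖^2 - p^2 + s^2)/(2 r s ‖x₂‖))`,
one has `(‖x₁‖ ‖x₂‖ - Re⟨x₁, x₂⟩) / (‖x₁‖ + ‖x₂‖)^2 ≤ (1/2) (1 - αrs^2)`. -/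
theorem stmt10 {𝕜 H : Type*} [RCLike 𝕜] [NormedAddCommGroup H] [InnerProductSpace 𝕜 H]
    {a : H} (ha : ‖a‖ = 1) {r s p : ℝ} (hr : 0 < r) (hs : 0 < s)
    (hp0 : 0 < p) (hps : p ≤ s)
    (x₁ x₂ : H) (hx₁ : x₁ ≠ 0) (hx₂ : x₂ ≠ 0)
    (h₁ : ‖(r : 𝕜) • x₁ - (s : 𝕜) • a‖ ≤ p)
    (h₂ : ‖(r : 𝕜) • x₂ - (s : 𝕜) • a‖ ≤ p) :
    (‖x₁‖ * ‖x₂‖ - RCLike.re (inner 𝕜 x₁ x₂ : 𝕜)) / (‖x₁‖ + ‖x₂‖) ^ 2 ≤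
      (1 / 2) * (1 -
        (min ((r ^ 2 * ‖x₁‖ ^ 2 - p ^ 2 + s ^ 2) / (2 * r * s * ‖x₁‖))
             ((r ^ 2 * ‖x₂‖ ^ 2 - p ^ 2 + s ^ 2) / (2 * r * s * ‖x₂‖))) ^ 2) := by
  have n1 : (0:ℝ) < ‖x₁‖ := norm_pos_iff.mpr hx₁
  have n2 : (0:ℝ) < ‖x₂‖ := norm_pos_iff.mpr hx₂
  set α := min ((r ^ 2 * ‖x₁‖ ^ 2 - p ^ 2 + s ^ 2) / (2 * r * s * ‖x₁‖))
             ((r ^ 2 * ‖x₂‖ ^ 2 - p ^ 2 + s ^ 2) / (2 * r * s * ‖x₂‖)) with hαdef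
  -- key expansion lemma
  have key : ∀ x : H, 0 < ‖x‖ → ‖(r:𝕜) • x - (s:𝕜) • a‖ ≤ p →
      (r^2 * ‖x‖^2 - p^2 + s^2) / (2*r*s*‖x‖) * ‖x‖ ≤ RCLike.re (inner 𝕜 x a : 𝕜) := by
    intro x hx h
    have e : ‖(r : 𝕜) • x - (s : 𝕜) • a‖^2
        = r^2*‖x‖^2 - 2*(r*s)*RCLike.re (inner 𝕜 x a : 𝕜) + s^2 := by
      rw [@norm_sub_sq 𝕜]
      simp [norm_smul, inner_smul_left, inner_smul_right, RCLike.conj_ofReal, mul_pow,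
        ← RCLike.ofReal_mul, RCLike.re_ofReal_mul, ha]
      ring
    have hsq : ‖(r : 𝕜) • x - (s : 𝕜) • a‖^2 ≤ p^2 :=
      pow_le_pow_left₀ (norm_nonneg _) h 2
    rw [e] at hsq
    have hrw : (r^2 * ‖x‖^2 - p^2 + s^2) / (2*r*s*‖x‖) * ‖x‖
        = (r^2 * ‖x‖^2 - p^2 + s^2) / (2*r*s) := by
      field_simp
    rw [hrw, div_le_iff₀ (by positivity)]
    nlinarith [hsq]
  have k1 := key x₁ n1 h₁
  have k2 := key x₂ n2 h₂
  have hα1 : α * ‖x₁‖ ≤ RCLike.re (inner 𝕜 x₁ a : 𝕜) :=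
    le_trans (by gcongr; exact min_le_left _ _) k1
  have hα2 : α * ‖x₂‖ ≤ RCLike.re (inner 𝕜 x₂ a : 𝕜) :=
    le_trans (by gcongr; exact min_le_right _ _) k2
  have hα0 : 0 ≤ α := by
    apply le_min <;> apply div_nonneg _ (by positivity) <;> nlinarith
  clear hαdef
  clear_value α
  set e₁ : H := ((‖x₁‖:𝕜))⁻¹ • x₁ with he1
  set e₂ : H := ((‖x₂‖:𝕜))⁻¹ • x₂ with he2
  have ne1 : ‖e₁‖ = 1 := by
    rw [he1, norm_smul, norm_inv, RCLike.norm_ofReal, abs_of_pos n1,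
      inv_mul_cancel₀ n1.ne']
  have ne2 : ‖e₂‖ = 1 := by
    rw [he2, norm_smul, norm_inv, RCLike.norm_ofReal, abs_of_pos n2,
      inv_mul_cancel₀ n2.ne']
  have re1 : RCLike.re (inner 𝕜 e₁ a : 𝕜) = ‖x₁‖⁻¹ * RCLike.re (inner 𝕜 x₁ a : 𝕜) := by
    rw [he1, inner_smul_left, map_inv₀, RCLike.conj_ofReal, ← RCLike.ofReal_inv,
      RCLike.re_ofReal_mul]
  have re2 : RCLike.re (inner 𝕜 e₂ a : 𝕜) = ‖x₂‖⁻¹ * RCLike.re (inner 𝕜 x₂ a : 𝕜) := by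
    rw [he2, inner_smul_left, map_inv₀, RCLike.conj_ofReal, ← RCLike.ofReal_inv,
      RCLike.re_ofReal_mul]
  have re12 : RCLike.re (inner 𝕜 e₁ e₂ : 𝕜)
      = ‖x₁‖⁻¹ * (‖x₂‖⁻¹ * RCLike.re (inner 𝕜 x₁ x₂ : 𝕜)) := by
    rw [he1, he2, inner_smul_left, inner_smul_right, map_inv₀, RCLike.conj_ofReal,
      ← RCLike.ofReal_inv, ← RCLike.ofReal_inv, RCLike.re_ofReal_mul, RCLike.re_ofReal_mul]
  clear he1 he2
  clear_value e₁ e₂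
  have A1 : α ≤ RCLike.re (inner 𝕜 e₁ a : 𝕜) := by
    rw [re1, inv_mul_eq_div, le_div_iff₀ n1]; exact hα1
  have A2 : α ≤ RCLike.re (inner 𝕜 e₂ a : 𝕜) := by
    rw [re2, inv_mul_eq_div, le_div_iff₀ n2]; exact hα2
  have hsum : 2*α ≤ ‖e₁ + e₂‖ := by
    have hcs : RCLike.re (inner 𝕜 (e₁ + e₂) a : 𝕜) ≤ ‖e₁ + e₂‖ * ‖a‖ := re_inner_le_norm _ _
    rw [ha, mul_one] at hcs
    have hadd : RCLike.re (inner 𝕜 (e₁ + e₂) a : 𝕜)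
        = RCLike.re (inner 𝕜 e₁ a : 𝕜) + RCLike.re (inner 𝕜 e₂ a : 𝕜) := by
      rw [inner_add_left, map_add]
    linarith
  have hsumsq : 4*α^2 ≤ ‖e₁ + e₂‖^2 := by nlinarith [hsum, hα0]
  have hpar : ‖e₁ + e₂‖^2 + ‖e₁ - e₂‖^2 = 4 := by
    have := @parallelogram_law_with_norm 𝕜 H _ _ _ e₁ e₂
    rw [ne1, ne2] at this; linarith [this]
  have hdiff : ‖e₁ - e₂‖^2 = 2 - 2 * RCLike.re (inner 𝕜 e₁ e₂ : 𝕜) := by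
    rw [@norm_sub_sq 𝕜, ne1, ne2]; ring
  have ht1 : RCLike.re (inner 𝕜 e₁ e₂ : 𝕜) ≤ 1 := by
    have := re_inner_le_norm (𝕜 := 𝕜) e₁ e₂; rw [ne1, ne2] at this; linarith
  have h5 : 2 - 2 * RCLike.re (inner 𝕜 e₁ e₂ : 𝕜) ≤ 4 - 4*α^2 := by
    rw [← hdiff]; linarith [hpar, hsumsq]
  have hα1' : 0 ≤ 1 - α^2 := by linarith [h5, ht1]
  have core : ‖x₁‖ * ‖x₂‖ - RCLike.re (inner 𝕜 x₁ x₂ : 𝕜)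
      ≤ 2 * (‖x₁‖ * ‖x₂‖) * (1 - α^2) := by
    rw [re12] at h5
    have h6 := mul_le_mul_of_nonneg_left h5 (le_of_lt (mul_pos n1 n2))
    have h7 : ‖x₁‖*‖x₂‖ * (2 - 2*(‖x₁‖⁻¹ * (‖x₂‖⁻¹ * RCLike.re (inner 𝕜 x₁ x₂ : 𝕜))))
        = 2*(‖x₁‖*‖x₂‖) - 2*RCLike.re (inner 𝕜 x₁ x₂ : 𝕜) := by
      field_simp
    rw [h7] at h6
    have h8 : ‖x₁‖*‖x₂‖*(4 - 4*α^2) = 2*(2*(‖x₁‖*‖x₂‖)*(1-α^2)) := by ring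
    rw [h8] at h6
    linarith
  rw [div_le_iff₀ (by positivity)]
  nlinarith [core, mul_nonneg hα1' (sq_nonneg (‖x₁‖ - ‖x₂‖))]
end

section
/- Let a be a unit vector in a real or complex inner product space H and let r, s > 0. Suppose x, y ∈ H satisfy ‖r x − s a‖ ≤ s, ‖r y − s a‖ ≤ s and 0 < ‖x‖ ≤ ‖y‖. Then (‖x‖‖y‖ − Re⟨x, y⟩) / (‖x‖ + ‖y‖)² ≤ (1/2)(1 − (r‖x‖/(2s))²). -/
open RCLike

private theorem key332 {𝕜 H : Type*} [RCLike 𝕜] [NormedAddCommGroup H] [InnerProductSpace 𝕜 H]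
    {a : H} (ha : ‖a‖ = 1) {r s : ℝ} (hr : 0 < r) (hs : 0 < s)
    (x : H)
    (hx : ‖(r : 𝕜) • x - (s : 𝕜) • a‖ ≤ s) :
    r * ‖x‖^2 ≤ 2 * s * re (inner 𝕜 x a : 𝕜) := by
  have h2 : ‖(r : 𝕜) • x - (s : 𝕜) • a‖^2 ≤ s^2 := by
    have := norm_nonneg ((r : 𝕜) • x - (s : 𝕜) • a)
    nlinarith
  rw [@norm_sub_sq 𝕜] at h2
  simp [inner_smul_left, inner_smul_right, norm_smul, RCLike.conj_ofReal, mul_assoc, ha,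
    RCLike.norm_ofReal] at h2
  rw [abs_of_pos hr] at h2
  nlinarith

private theorem normsq332 {𝕜 H : Type*} [RCLike 𝕜] [NormedAddCommGroup H] [InnerProductSpace 𝕜 H]
    {a : H} (ha : ‖a‖ = 1) (x : H) (α : ℝ) (hα : re (inner 𝕜 x a : 𝕜) = α) :
    ‖x - (α : 𝕜) • a‖^2 = ‖x‖^2 - α^2 := by
  rw [@norm_sub_sq 𝕜]
  simp [inner_smul_right, norm_smul, ha, RCLike.norm_ofReal, hα, sq_abs]
  ring

private theorem cross332 {𝕜 H : Type*} [RCLike 𝕜] [NormedAddCommGroup H] [InnerProductSpace 𝕜 H]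
    (x y a : H) (α β : ℝ) :
    re (inner 𝕜 (x - (α : 𝕜) • a) (y - (β : 𝕜) • a) : 𝕜)
      = re (inner 𝕜 x y : 𝕜) - β * re (inner 𝕜 x a : 𝕜) - α * re (inner 𝕜 a y : 𝕜)
        + α * β * re (inner 𝕜 a a : 𝕜) := by
  simp [inner_sub_left, inner_sub_right, inner_smul_left, inner_smul_right,
    RCLike.conj_ofReal]
  ring

set_option maxHeartbeats 1000000 in
private theorem scalar332 {X Y al be R u P Q : ℝ}
    (hx0 : 0 < X) (hxy : X ≤ Y) (hy0 : 0 < Y)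
    (hα0 : 0 < al) (hβ0 : 0 < be) (hαX : al ≤ X)
    (hu0 : 0 < u) (hu1 : u * X^2 ≤ al) (hu2 : u * Y^2 ≤ be)
    (hP2 : P^2 = X^2 - al^2) (hQ2 : Q^2 = Y^2 - be^2)
    (hPn : 0 ≤ P) (hQn : 0 ≤ Q)
    (hlow : R - al * be ≥ -(P * Q)) :
    (X * Y - R) / (X + Y) ^ 2 ≤ (1 / 2) * (1 - (u * X) ^ 2) := by
  have huX : u * X ≤ 1 := by nlinarith
  have hXY2 : X^2 ≤ Y^2 := by nlinarith
  have hPb : P^2 ≤ X^2 * (1 - u^2 * X^2) := by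
    nlinarith [mul_self_le_mul_self (by positivity : (0:ℝ) ≤ u * X^2) hu1]
  have hQb : Q^2 ≤ Y^2 * (1 - u^2 * X^2) := by
    nlinarith [mul_self_le_mul_self (by positivity : (0:ℝ) ≤ u * Y^2) hu2,
      mul_le_mul_of_nonneg_left hXY2 (by positivity : (0:ℝ) ≤ u^2 * Y^2)]
  have h1mu : 0 ≤ 1 - u^2 * X^2 := by nlinarith
  have hK0 : 0 ≤ X * Y * (1 - u^2 * X^2) := by positivity
  have hPQ : P * Q ≤ X * Y * (1 - u^2 * X^2) := by
    apply le_of_pow_le_pow_left₀ two_ne_zero hK0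
    calc (P * Q)^2 = P^2 * Q^2 := by ring
    _ ≤ (X^2 * (1 - u^2 * X^2)) * (Y^2 * (1 - u^2 * X^2)) :=
        mul_le_mul hPb hQb (sq_nonneg Q) (by positivity)
    _ = (X * Y * (1 - u^2 * X^2))^2 := by ring
  have hαβ : u^2 * X^2 * (X * Y) ≤ al * be := by
    nlinarith [mul_le_mul hu1 hu2 (by positivity) hα0.le,
      mul_nonneg (mul_nonneg (sq_nonneg u) (sq_nonneg X))
        (mul_nonneg hy0.le (sub_nonneg.2 hxy))]
  have hRlow : R ≥ X * Y * (2 * u^2 * X^2 - 1) := by nlinarith [hlow, hPQ, hαβ]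
  rw [div_le_iff₀ (by positivity)]
  nlinarith [hRlow, mul_nonneg h1mu (sq_nonneg (X - Y))]

/-- **Corollary 3.2.** Let `a` be a unit vector in a real or complex inner product space `H`
and `r, s > 0`.  If `x, y ∈ H` satisfy `‖r • x - s • a‖ ≤ s`, `‖r • y - s • a‖ ≤ s` and
`0 < ‖x‖ ≤ ‖y‖`, then
`(‖x‖ ‖y‖ - Re⟨x, y⟩) / (‖x‖ + ‖y‖)^2 ≤ (1/2) (1 - (r ‖x‖ / (2 s))^2)`. -/
theorem stmt11 {𝕜 H : Type*} [RCLike 𝕜] [NormedAddCommGroup H] [InnerProductSpace 𝕜 H]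
    {a : H} (ha : ‖a‖ = 1) {r s : ℝ} (hr : 0 < r) (hs : 0 < s)
    (x y : H)
    (hx : ‖(r : 𝕜) • x - (s : 𝕜) • a‖ ≤ s)
    (hy : ‖(r : 𝕜) • y - (s : 𝕜) • a‖ ≤ s)
    (hx0 : 0 < ‖x‖) (hxy : ‖x‖ ≤ ‖y‖) :
    (‖x‖ * ‖y‖ - RCLike.re (inner 𝕜 x y : 𝕜)) / (‖x‖ + ‖y‖) ^ 2 ≤
      (1 / 2) * (1 - (r * ‖x‖ / (2 * s)) ^ 2) := by
  set X := ‖x‖ with hX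
  set Y := ‖y‖ with hY
  set α := re (inner 𝕜 x a : 𝕜) with hα
  set β := re (inner 𝕜 y a : 𝕜) with hβ
  set R := re (inner 𝕜 x y : 𝕜) with hR
  have hy0 : 0 < Y := lt_of_lt_of_le hx0 hxy
  have h1 : r * X^2 ≤ 2 * s * α := key332 ha hr hs x hx
  have h2 : r * Y^2 ≤ 2 * s * β := key332 ha hr hs y hy
  have hα0 : 0 < α := by nlinarith [mul_pos hr (pow_pos hx0 2)]
  have hβ0 : 0 < β := by nlinarith [mul_pos hr (pow_pos hy0 2)]
  have hαX : α ≤ X := by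
    calc α ≤ ‖(inner 𝕜 x a : 𝕜)‖ := RCLike.re_le_norm _
    _ ≤ X * ‖a‖ := norm_inner_le_norm x a
    _ = X := by rw [ha, mul_one]
  -- u = r/(2s)
  set u := r / (2 * s) with hu
  have hu0 : 0 < u := by positivity
  have hu1 : u * X^2 ≤ α := by
    rw [hu, div_mul_eq_mul_div, div_le_iff₀ (by positivity)]; linarith
  have hu2 : u * Y^2 ≤ β := by
    rw [hu, div_mul_eq_mul_div, div_le_iff₀ (by positivity)]; linarith
  -- orthogonal parts
  set P := ‖x - (α : 𝕜) • a‖ with hP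
  set Q := ‖y - (β : 𝕜) • a‖ with hQ
  have hP2 : P^2 = X^2 - α^2 := normsq332 ha x α hα.symm
  have hQ2 : Q^2 = Y^2 - β^2 := normsq332 ha y β hβ.symm
  have haa : re (inner 𝕜 a a : 𝕜) = 1 := by
    rw [@inner_self_eq_norm_sq 𝕜, ha]; norm_num
  have hay : re (inner 𝕜 a y : 𝕜) = β := by rw [hβ, inner_re_symm]
  have hcr : re (inner 𝕜 (x - (α : 𝕜) • a) (y - (β : 𝕜) • a) : 𝕜) = R - α * β := by
    rw [cross332, ← hα, ← hR, hay, haa]; ring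
  have hlow : R - α * β ≥ -(P * Q) := by
    rw [← hcr]
    have h3 : |re (inner 𝕜 (x - (α : 𝕜) • a) (y - (β : 𝕜) • a) : 𝕜)|
        ≤ ‖(inner 𝕜 (x - (α : 𝕜) • a) (y - (β : 𝕜) • a) : 𝕜)‖ := RCLike.abs_re_le_norm _
    have h4 := norm_inner_le_norm (𝕜 := 𝕜) (x - (α : 𝕜) • a) (y - (β : 𝕜) • a)
    rw [← hP, ← hQ] at h4
    cases abs_cases (re (inner 𝕜 (x - (α : 𝕜) • a) (y - (β : 𝕜) • a) : 𝕜)) with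
    | inl h => linarith [h.1 ▸ le_trans h3 h4]
    | inr h => linarith [le_trans h3 h4]
  -- bounds on P, Q
  have hPn : 0 ≤ P := norm_nonneg _
  have hQn : 0 ≤ Q := norm_nonneg _
  have hgoal : r * X / (2 * s) = u * X := by rw [hu]; ring
  rw [hgoal]
  exact scalar332 hx0 hxy hy0 hα0 hβ0 hαX hu0 hu1 hu2 hP2 hQ2 hPn hQn hlow
end

section
/- Let a be a unit vector in a real or complex inner product space H, let M ≥ m > 0, and let x_1, x_2 ∈ H be nonzero vectors satisfying ‖x_k − ((m + M)/2) a‖ ≤ (M − m)/2 for k = 1, 2. Set β = min{(‖x_k‖² + mM)/((m + M)‖x_k‖) : k = 1, 2}. Then (‖x_1‖‖x_2‖ − Re⟨x_1, x_2⟩) / (‖x_1‖ + ‖x_2‖)² ≤ (1/2)(1 − β²). -/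
set_option maxHeartbeats 1000000 in
/-- **Corollary 3.3.** Let `a` be a unit vector in a real or complex inner product space `H`,
`M ≥ m > 0`, and let `x₁, x₂` be nonzero vectors with
`‖xₖ - ((m + M)/2) • a‖ ≤ (M - m)/2` for `k = 1, 2`.  With
`β = min ((‖x₁‖^2 + m M)/((m + M) ‖x₁‖)) ((‖x₂‖^2 + m M)/((m + M) ‖x₂‖))`, one has
`(‖x₁‖ ‖x₂‖ - Re⟨x₁, x₂⟩) / (‖x₁‖ + ‖x₂‖)^2 ≤ (1/2) (1 - β^2)`. -/
theorem stmt12 {𝕜 H : Type*} [RCLike 𝕜] [NormedAddCommGroup H] [InnerProductSpace 𝕜 H]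
    {a : H} (ha : ‖a‖ = 1) {m M : ℝ} (hm : 0 < m) (hmM : m ≤ M)
    (x₁ x₂ : H) (hx₁ : x₁ ≠ 0) (hx₂ : x₂ ≠ 0)
    (h₁ : ‖x₁ - (((m + M) / 2 : ℝ) : 𝕜) • a‖ ≤ (M - m) / 2)
    (h₂ : ‖x₂ - (((m + M) / 2 : ℝ) : 𝕜) • a‖ ≤ (M - m) / 2) :
    (‖x₁‖ * ‖x₂‖ - RCLike.re (inner 𝕜 x₁ x₂ : 𝕜)) / (‖x₁‖ + ‖x₂‖) ^ 2 ≤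
      (1 / 2) * (1 -
        (min ((‖x₁‖ ^ 2 + m * M) / ((m + M) * ‖x₁‖))
             ((‖x₂‖ ^ 2 + m * M) / ((m + M) * ‖x₂‖))) ^ 2) := by
  have hmM0 : (0:ℝ) < m + M := by linarith
  have ht₁ : (0:ℝ) < ‖x₁‖ := norm_pos_iff.mpr hx₁
  have ht₂ : (0:ℝ) < ‖x₂‖ := norm_pos_iff.mpr hx₂
  -- key: (‖x‖² + mM) ≤ (m+M) re⟪x,a⟫
  have key : ∀ x : H, ‖x - (((m + M) / 2 : ℝ) : 𝕜) • a‖ ≤ (M - m) / 2 →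
      ‖x‖ ^ 2 + m * M ≤ (m + M) * RCLike.re (inner 𝕜 x a : 𝕜) := by
    intro x hx
    have hsq : ‖x - (((m + M) / 2 : ℝ) : 𝕜) • a‖ ^ 2 ≤ ((M - m) / 2) ^ 2 :=
      pow_le_pow_left₀ (norm_nonneg _) hx 2
    rw [@norm_sub_sq 𝕜] at hsq
    rw [inner_smul_right] at hsq
    rw [norm_smul] at hsq
    simp only [RCLike.re_ofReal_mul, RCLike.norm_ofReal, ha, mul_one] at hsq
    have habs : |(m + M) / 2| = (m + M) / 2 := abs_of_pos (by linarith)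
    rw [habs] at hsq
    nlinarith [hsq]
  have k₁ := key x₁ h₁
  have k₂ := key x₂ h₂
  set β := min ((‖x₁‖ ^ 2 + m * M) / ((m + M) * ‖x₁‖))
      ((‖x₂‖ ^ 2 + m * M) / ((m + M) * ‖x₂‖)) with hβ
  have hβ1 : β ≤ (‖x₁‖ ^ 2 + m * M) / ((m + M) * ‖x₁‖) := min_le_left _ _
  have hβ2 : β ≤ (‖x₂‖ ^ 2 + m * M) / ((m + M) * ‖x₂‖) := min_le_right _ _
  have hβpos : 0 < β := by
    have h1 : 0 < ‖x₁‖ ^ 2 + m * M := by nlinarith [sq_nonneg ‖x₁‖]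
    have h2 : 0 < ‖x₂‖ ^ 2 + m * M := by nlinarith [sq_nonneg ‖x₂‖]
    exact lt_min (div_pos h1 (mul_pos hmM0 ht₁)) (div_pos h2 (mul_pos hmM0 ht₂))
  -- β * ‖x_k‖ ≤ re⟪x_k, a⟫
  have hr₁ : β * ‖x₁‖ ≤ RCLike.re (inner 𝕜 x₁ a : 𝕜) := by
    have h := (le_div_iff₀ (mul_pos hmM0 ht₁)).mp hβ1
    nlinarith [k₁]
  have hr₂ : β * ‖x₂‖ ≤ RCLike.re (inner 𝕜 x₂ a : 𝕜) := by
    have h := (le_div_iff₀ (mul_pos hmM0 ht₂)).mp hβ2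
    nlinarith [k₂]
  -- β ≤ 1
  have hcs₁ : RCLike.re (inner 𝕜 x₁ a : 𝕜) ≤ ‖x₁‖ := by
    have := re_inner_le_norm (𝕜 := 𝕜) x₁ a
    rwa [ha, mul_one] at this
  have hβle1 : β ≤ 1 := by
    by_contra h
    push_neg at h
    have : ‖x₁‖ < β * ‖x₁‖ := by nlinarith
    linarith [hr₁, hcs₁]
  -- the vector w = ‖x₂‖ • x₁ + ‖x₁‖ • x₂
  set w : H := ((‖x₂‖ : 𝕜)) • x₁ + ((‖x₁‖ : 𝕜)) • x₂ with hw
  have hwnorm : ‖w‖ ^ 2 = 2 * ‖x₁‖ ^ 2 * ‖x₂‖ ^ 2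
      + 2 * (‖x₁‖ * ‖x₂‖) * RCLike.re (inner 𝕜 x₁ x₂ : 𝕜) := by
    rw [hw, @norm_add_sq 𝕜]
    rw [norm_smul, norm_smul, inner_smul_left, inner_smul_right]
    simp only [RCLike.norm_ofReal, abs_of_pos ht₁, abs_of_pos ht₂,
      RCLike.conj_ofReal, ← RCLike.ofReal_mul, RCLike.re_ofReal_mul]
    ring
  have hwa : RCLike.re (inner 𝕜 w a : 𝕜) =
      ‖x₂‖ * RCLike.re (inner 𝕜 x₁ a : 𝕜) + ‖x₁‖ * RCLike.re (inner 𝕜 x₂ a : 𝕜) := by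
    rw [hw, inner_add_left, inner_smul_left, inner_smul_left, map_add]
    simp only [RCLike.conj_ofReal, RCLike.re_ofReal_mul]
  have hwa_le : RCLike.re (inner 𝕜 w a : 𝕜) ≤ ‖w‖ := by
    have := re_inner_le_norm (𝕜 := 𝕜) w a
    rwa [ha, mul_one] at this
  have hlower : 2 * β * (‖x₁‖ * ‖x₂‖) ≤ RCLike.re (inner 𝕜 w a : 𝕜) := by
    rw [hwa]; nlinarith [hr₁, hr₂]
  have hlower0 : 0 ≤ 2 * β * (‖x₁‖ * ‖x₂‖) := by positivity
  have hsq : (2 * β * (‖x₁‖ * ‖x₂‖)) ^ 2 ≤ ‖w‖ ^ 2 :=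
    pow_le_pow_left₀ hlower0 (le_trans hlower hwa_le) 2
  rw [hwnorm] at hsq
  have hre : (2 * β ^ 2 - 1) * (‖x₁‖ * ‖x₂‖) ≤ RCLike.re (inner 𝕜 x₁ x₂ : 𝕜) := by
    nlinarith [hsq, mul_pos ht₁ ht₂]
  have hnn : 0 ≤ 1 - β ^ 2 := by nlinarith [hβpos.le, hβle1]
  rw [div_le_iff₀ (by positivity)]
  nlinarith [hre, hnn, mul_nonneg hnn (sq_nonneg (‖x₁‖ - ‖x₂‖)), mul_pos ht₁ ht₂]
end
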